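/- arXiv:2310.13881 — 2 statements merged into one kernel-verified Lean document; each statement's English description precedes it below -/
import Mathlib

section
/- Let F be a finite field, V a finite F-vector space, and a₁, b₁, a₂, b₂, a₃, b₃ nonzero elements of F. Let M₁, M₂ be random variables with values in finite sets and X₁, X₂, N₁, N₂, N₃' be V-valued random variables such that the five blocks (M₁, X₁), (M₂, X₂), N₁, N₂, N₃' are mutually independent. Define N₃ := (b₃/b₁)N₁ + (a₃/a₂)N₂ + N₃', Y₁ := a₁X₁ + b₁X₂ + N₁, Y₂ := a₂X₁ + b₂X₂ + N₂, Z := a₃X₁ + b₃X₂ + N₃. Then I(M₁; Y₂ | X₂) + I(M₂; Y₁ | X₁) − I(M₁, M₂; Z) ≤ H(a₃X₁ + (a₃/a₂)N₂) − H((a₃/a₂)N₂) + H(b₃X₂ + (b₃/b₁)N₁) − H((b₃/b₁)N₁) − H(a₃X₁ + b₃X₂ + N₃) + H(N₃). -/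
open scoped BigOperators Classical

/-- Shannon entropy `H(P) = −∑ P log P` of a pmf on a finite set. -/
noncomputable def Hent {α : Type*} [Fintype α] (P : α → ℝ) : ℝ := ∑ a, Real.negMulLog (P a)

/-- Pushforward pmf of `P` along `f`. -/
noncomputable def pushf {Ω α : Type*} [Fintype Ω] (P : Ω → ℝ) (f : Ω → α) : α → ℝ :=
  fun a => ∑ ω, if f ω = a then P ω else 0

/-- Mutual information `I(X;Y) = H(X) + H(Y) − H(X,Y)` of a joint pmf. -/
noncomputable def miInfo {α β : Type*} [Fintype α] [Fintype β] (P : α × β → ℝ) : ℝ :=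
  Hent (fun a => ∑ b, P (a, b)) + Hent (fun b => ∑ a, P (a, b)) - Hent P

/-- Conditional mutual information `I(X;Y|Z)` of a joint pmf on `α × β × γ`. -/
noncomputable def cmiInfo {α β γ : Type*} [Fintype α] [Fintype β] [Fintype γ]
    (P : α × β × γ → ℝ) : ℝ :=
  Hent (fun p : α × γ => ∑ b, P (p.1, b, p.2)) + Hent (fun p : β × γ => ∑ a, P (a, p.1, p.2))
    - Hent (fun c : γ => ∑ a, ∑ b, P (a, b, c)) - Hent P

/-- A probability mass function on a finite set. -/
def IsPMF {α : Type*} [Fintype α] (P : α → ℝ) : Prop := (∀ a, 0 ≤ P a) ∧ ∑ a, P a = 1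

/-- Joint pmf of the five mutually independent blocks `((M₁,X₁),(M₂,X₂),N₁,N₂,N₃')`. -/
noncomputable def blockPMF {S1 S2 V : Type*} [Fintype S1] [Fintype S2] [Fintype V]
    (p1 : S1 × V → ℝ) (p2 : S2 × V → ℝ) (q1 q2 q3 : V → ℝ) :
    (S1 × V) × (S2 × V) × V × V × V → ℝ :=
  fun ω => p1 ω.1 * p2 ω.2.1 * q1 ω.2.2.1 * q2 ω.2.2.2.1 * q3 ω.2.2.2.2


set_option linter.unusedSectionVars false
set_option linter.unreachableTactic false
set_option linter.unusedTactic false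
set_option maxHeartbeats 12000000

section AuxLemmas
set_option linter.unusedSectionVars false







variable {Ω α β γ : Type*} [Fintype Ω] [Fintype α] [Fintype β] [Fintype γ]

lemma pushf_apply (P : Ω → ℝ) (f : Ω → α) (a : α) :
    pushf P f a = ∑ ω, if f ω = a then P ω else 0 := rfl

lemma pushf_sum (P : Ω → ℝ) (f : Ω → α) : ∑ a, pushf P f a = ∑ ω, P ω := by
  unfold pushf
  rw [Finset.sum_comm]
  exact Finset.sum_congr rfl fun ω _ => by simp

lemma pushf_nonneg (P : Ω → ℝ) (hP : ∀ ω, 0 ≤ P ω) (f : Ω → α) (a : α) :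
    0 ≤ pushf P f a :=
  Finset.sum_nonneg fun ω _ => by by_cases h : f ω = a <;> simp [h, hP ω]

lemma Hent_pushf_inj (Q : Ω → ℝ) (g : Ω → α) (hg : Function.Injective g) :
    Hent (pushf Q g) = Hent Q := by
  unfold Hent pushf
  have h1 : ∀ a ∈ Finset.univ, a ∉ Finset.univ.image g →
      Real.negMulLog (∑ ω, if g ω = a then Q ω else 0) = 0 := by
    intro a _ ha
    have : (∑ ω, if g ω = a then Q ω else 0) = 0 :=
      Finset.sum_eq_zero fun ω _ => by
        have : g ω ≠ a := fun h => ha (Finset.mem_image.mpr ⟨ω, Finset.mem_univ _, h⟩)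
        simp [this]
    simp [this]
  rw [← Finset.sum_subset (Finset.subset_univ _) h1,
    Finset.sum_image (fun x _ y _ h => hg h)]
  refine Finset.sum_congr rfl fun ω _ => ?_
  congr 1
  simp [hg.eq_iff]

lemma pushf_comp (P : Ω → ℝ) (f : Ω → α) (g : α → β) :
    pushf P (fun ω => g (f ω)) = pushf (pushf P f) g := by
  funext b
  unfold pushf
  calc (∑ ω, if g (f ω) = b then P ω else 0)
      = ∑ ω, ∑ a, (if f ω = a then (if g a = b then P ω else 0) else 0) := by
        refine Finset.sum_congr rfl fun ω _ => ?_
        simp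
    _ = ∑ a, ∑ ω, (if f ω = a then (if g a = b then P ω else 0) else 0) := Finset.sum_comm
    _ = ∑ a, (if g a = b then (∑ ω, if f ω = a then P ω else 0) else 0) := by
        refine Finset.sum_congr rfl fun a _ => ?_
        by_cases h : g a = b <;> simp [h]

lemma Hent_comp_inj (P : Ω → ℝ) (f : Ω → α) (g : α → β) (hg : Function.Injective g) :
    Hent (pushf P (fun ω => g (f ω))) = Hent (pushf P f) := by
  rw [pushf_comp, Hent_pushf_inj _ _ hg]

lemma marg_fst (P : Ω → ℝ) (f : Ω → α) (g : Ω → β) :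
    (fun a => ∑ b, pushf P (fun ω => (f ω, g ω)) (a, b)) = pushf P f := by
  funext a
  unfold pushf
  rw [Finset.sum_comm]
  refine Finset.sum_congr rfl fun ω _ => ?_
  by_cases h : f ω = a <;> simp [Prod.ext_iff, h]

lemma marg_snd (P : Ω → ℝ) (f : Ω → α) (g : Ω → β) :
    (fun b => ∑ a, pushf P (fun ω => (f ω, g ω)) (a, b)) = pushf P g := by
  funext b
  unfold pushf
  rw [Finset.sum_comm]
  refine Finset.sum_congr rfl fun ω _ => ?_
  by_cases h : g ω = b <;> simp [Prod.ext_iff, h]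

lemma marg3_13 (P : Ω → ℝ) (f : Ω → α) (g : Ω → β) (h : Ω → γ) :
    (fun p : α × γ => ∑ b, pushf P (fun ω => (f ω, g ω, h ω)) (p.1, b, p.2))
      = pushf P (fun ω => (f ω, h ω)) := by
  funext p
  unfold pushf
  rw [Finset.sum_comm]
  refine Finset.sum_congr rfl fun ω _ => ?_
  by_cases h1 : f ω = p.1 <;> by_cases h2 : h ω = p.2 <;> simp [Prod.ext_iff, h1, h2]

lemma marg3_23 (P : Ω → ℝ) (f : Ω → α) (g : Ω → β) (h : Ω → γ) :
    (fun p : β × γ => ∑ a, pushf P (fun ω => (f ω, g ω, h ω)) (a, p.1, p.2))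
      = pushf P (fun ω => (g ω, h ω)) := by
  funext p
  unfold pushf
  rw [Finset.sum_comm]
  refine Finset.sum_congr rfl fun ω _ => ?_
  by_cases h1 : g ω = p.1 <;> by_cases h2 : h ω = p.2 <;> simp [Prod.ext_iff, h1, h2]

lemma marg3_3 (P : Ω → ℝ) (f : Ω → α) (g : Ω → β) (h : Ω → γ) :
    (fun c : γ => ∑ a, ∑ b, pushf P (fun ω => (f ω, g ω, h ω)) (a, b, c)) = pushf P h := by
  funext c
  calc (∑ a, ∑ b, pushf P (fun ω => (f ω, g ω, h ω)) (a, b, c))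
      = ∑ b, ∑ a, pushf P (fun ω => (f ω, g ω, h ω)) (a, (b, c)) := Finset.sum_comm
    _ = ∑ b, pushf P (fun ω => (g ω, h ω)) (b, c) :=
        Finset.sum_congr rfl fun b _ =>
          congrFun (marg_snd P f (fun ω => (g ω, h ω))) (b, c)
    _ = pushf P h c := congrFun (marg_snd P g h) c

lemma Hent_prod (Q : α → ℝ) (R : β → ℝ) (hQ : ∑ a, Q a = 1) (hR : ∑ b, R b = 1) :
    Hent (fun p : α × β => Q p.1 * R p.2) = Hent Q + Hent R := by
  unfold Hent
  rw [Fintype.sum_prod_type]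
  calc ∑ a, ∑ b, Real.negMulLog (Q a * R b)
      = ∑ a, ∑ b, (R b * Real.negMulLog (Q a) + Q a * Real.negMulLog (R b)) := by
        simp [Real.negMulLog_mul]
    _ = ∑ a, ((∑ b, R b) * Real.negMulLog (Q a) + Q a * ∑ b, Real.negMulLog (R b)) := by
        refine Finset.sum_congr rfl fun a _ => ?_
        rw [Finset.sum_add_distrib, ← Finset.sum_mul, ← Finset.mul_sum]
    _ = ∑ a, (Real.negMulLog (Q a) + Q a * ∑ b, Real.negMulLog (R b)) := by
        rw [hR]; simp
    _ = ∑ a, Real.negMulLog (Q a) + (∑ a, Q a) * ∑ b, Real.negMulLog (R b) := by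
        rw [Finset.sum_add_distrib, ← Finset.sum_mul]
    _ = ∑ a, Real.negMulLog (Q a) + ∑ b, Real.negMulLog (R b) := by
        rw [hQ, one_mul]

section Split
variable {ΩL ΩR : Type*} [Fintype ΩL] [Fintype ΩR]

lemma pushf_split_pair (P : Ω → ℝ) (π : Ω → ΩL × ΩR) (hπ : Function.Bijective π)
    (PL : ΩL → ℝ) (PR : ΩR → ℝ) (hfact : ∀ ω, P ω = PL (π ω).1 * PR (π ω).2)
    (u : ΩL → α) (v : ΩR → β) :
    pushf P (fun ω => (u (π ω).1, v (π ω).2)) = fun p => pushf PL u p.1 * pushf PR v p.2 := by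
  funext p
  have h1 : pushf P (fun ω => (u (π ω).1, v (π ω).2)) p
      = ∑ ω, (fun q : ΩL × ΩR => if (u q.1, v q.2) = p then PL q.1 * PR q.2 else 0) (π ω) := by
    unfold pushf
    refine Finset.sum_congr rfl fun ω _ => ?_
    rw [hfact ω]
    by_cases h : (u (π ω).1, v (π ω).2) = p <;> simp [h]
  rw [h1, hπ.sum_comp (fun q : ΩL × ΩR => if (u q.1, v q.2) = p then PL q.1 * PR q.2 else 0),
    Fintype.sum_prod_type]
  have h2 : ∀ l, (∑ r, if (u l, v r) = p then PL l * PR r else 0)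
      = (if u l = p.1 then PL l else 0) * ∑ r, (if v r = p.2 then PR r else 0) := by
    intro l
    rw [Finset.mul_sum]
    refine Finset.sum_congr rfl fun r _ => ?_
    by_cases h3 : u l = p.1 <;> by_cases h4 : v r = p.2 <;> simp [Prod.ext_iff, h3, h4]
  rw [Finset.sum_congr rfl fun l _ => h2 l, ← Finset.sum_mul]
  have e1 : (∑ l, if u l = p.1 then PL l else 0) = pushf PL u p.1 := by
    unfold pushf
    exact Finset.sum_congr rfl fun l _ => by by_cases h : u l = p.1 <;> simp [h]
  have e2 : (∑ r, if v r = p.2 then PR r else 0) = pushf PR v p.2 := by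
    unfold pushf
    exact Finset.sum_congr rfl fun r _ => by by_cases h : v r = p.2 <;> simp [h]
  rw [e1, e2]

lemma pushf_split_left (P : Ω → ℝ) (π : Ω → ΩL × ΩR) (hπ : Function.Bijective π)
    (PL : ΩL → ℝ) (PR : ΩR → ℝ) (hfact : ∀ ω, P ω = PL (π ω).1 * PR (π ω).2)
    (hR : ∑ r, PR r = 1) (u : ΩL → α) :
    pushf P (fun ω => u (π ω).1) = pushf PL u := by
  funext a
  have h1 : pushf P (fun ω => u (π ω).1) a
      = ∑ ω, (fun q : ΩL × ΩR => if u q.1 = a then PL q.1 * PR q.2 else 0) (π ω) := by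
    unfold pushf
    refine Finset.sum_congr rfl fun ω _ => ?_
    rw [hfact ω]
    try (by_cases h : u (π ω).1 = a <;> simp [h])
  rw [h1, hπ.sum_comp (fun q : ΩL × ΩR => if u q.1 = a then PL q.1 * PR q.2 else 0),
    Fintype.sum_prod_type]
  have h2 : ∀ l, (∑ r, if u l = a then PL l * PR r else 0) = (if u l = a then PL l else 0) := by
    intro l
    by_cases h : u l = a <;> simp [h, ← Finset.mul_sum, hR]
  rw [Finset.sum_congr rfl fun l _ => h2 l]
  try (unfold pushf
       exact Finset.sum_congr rfl fun l _ => by by_cases h : u l = a <;> simp [h])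

lemma pushf_split_right (P : Ω → ℝ) (π : Ω → ΩL × ΩR) (hπ : Function.Bijective π)
    (PL : ΩL → ℝ) (PR : ΩR → ℝ) (hfact : ∀ ω, P ω = PL (π ω).1 * PR (π ω).2)
    (hL : ∑ l, PL l = 1) (v : ΩR → β) :
    pushf P (fun ω => v (π ω).2) = pushf PR v := by
  funext b
  have h1 : pushf P (fun ω => v (π ω).2) b
      = ∑ ω, (fun q : ΩL × ΩR => if v q.2 = b then PL q.1 * PR q.2 else 0) (π ω) := by
    unfold pushf
    refine Finset.sum_congr rfl fun ω _ => ?_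
    rw [hfact ω]
    try (by_cases h : v (π ω).2 = b <;> simp [h])
  rw [h1, hπ.sum_comp (fun q : ΩL × ΩR => if v q.2 = b then PL q.1 * PR q.2 else 0),
    Fintype.sum_prod_type]
  have h2 : ∀ l, (∑ r, if v r = b then PL l * PR r else 0)
      = PL l * ∑ r, (if v r = b then PR r else 0) := by
    intro l
    rw [Finset.mul_sum]
    refine Finset.sum_congr rfl fun r _ => ?_
    by_cases h : v r = b <;> simp [h]
  rw [Finset.sum_congr rfl fun l _ => h2 l, ← Finset.sum_mul, hL, one_mul]
  try (unfold pushf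
       exact Finset.sum_congr rfl fun r _ => by by_cases h : v r = b <;> simp [h])

lemma Hent_split (P : Ω → ℝ) (π : Ω → ΩL × ΩR) (hπ : Function.Bijective π)
    (PL : ΩL → ℝ) (PR : ΩR → ℝ) (hfact : ∀ ω, P ω = PL (π ω).1 * PR (π ω).2)
    (hL : ∑ l, PL l = 1) (hR : ∑ r, PR r = 1) (u : ΩL → α) (v : ΩR → β) :
    Hent (pushf P (fun ω => (u (π ω).1, v (π ω).2)))
      = Hent (pushf P (fun ω => u (π ω).1)) + Hent (pushf P (fun ω => v (π ω).2)) := by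
  rw [pushf_split_pair P π hπ PL PR hfact u v,
    pushf_split_left P π hπ PL PR hfact hR u,
    pushf_split_right P π hπ PL PR hfact hL v]
  exact Hent_prod _ _ (by rw [pushf_sum, hL]) (by rw [pushf_sum, hR])

end Split

lemma sum_weight_pushf (P : Ω → ℝ) (f : Ω → α) (g : α → ℝ) :
    ∑ ω, P ω * g (f ω) = ∑ a, pushf P f a * g a := by
  symm
  unfold pushf
  calc ∑ a, (∑ ω, if f ω = a then P ω else 0) * g a
      = ∑ a, ∑ ω, (if f ω = a then P ω * g a else 0) := by
        refine Finset.sum_congr rfl fun a _ => ?_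
        rw [Finset.sum_mul]
        exact Finset.sum_congr rfl fun ω _ => by by_cases h : f ω = a <;> simp [h]
    _ = ∑ ω, ∑ a, (if f ω = a then P ω * g a else 0) := Finset.sum_comm
    _ = ∑ ω, P ω * g (f ω) := Finset.sum_congr rfl fun ω _ => by simp

lemma Hent_pushf_eq_neg_sum (P : Ω → ℝ) (f : Ω → α) :
    Hent (pushf P f) = - ∑ ω, P ω * Real.log (pushf P f (f ω)) := by
  unfold Hent
  have hterm : ∀ a, Real.negMulLog (pushf P f a)
      = - ∑ ω, (if f ω = a then P ω * Real.log (pushf P f a) else 0) := by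
    intro a
    have h2 : (∑ ω, if f ω = a then P ω * Real.log (pushf P f a) else 0)
        = (pushf P f a) * Real.log (pushf P f a) := by
      rw [pushf_apply, Finset.sum_mul]
      exact Finset.sum_congr rfl fun ω _ => by by_cases h : f ω = a <;> simp [h]
    rw [h2, Real.negMulLog]
    ring
  rw [Finset.sum_congr rfl fun a _ => hterm a, Finset.sum_neg_distrib]
  congr 1
  rw [Finset.sum_comm]
  refine Finset.sum_congr rfl fun ω _ => ?_
  simp

lemma le_pushf_self (P : Ω → ℝ) (hP0 : ∀ ω, 0 ≤ P ω) (f : Ω → α) (ω : Ω) :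
    P ω ≤ pushf P f (f ω) := by
  have := Finset.single_le_sum (f := fun ω' => if f ω' = f ω then P ω' else 0)
    (fun ω' _ => by by_cases h : f ω' = f ω <;> simp [h, hP0 ω']) (Finset.mem_univ ω)
  simpa [pushf_apply] using this

lemma pushf_le_pushf (P : Ω → ℝ) (hP0 : ∀ ω, 0 ≤ P ω) (f : Ω → α) (g : Ω → β)
    (a : α) (b : β) (himp : ∀ ω, f ω = a → g ω = b) :
    pushf P f a ≤ pushf P g b := by
  unfold pushf
  refine Finset.sum_le_sum fun ω _ => ?_
  by_cases h : f ω = a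
  · simp [h, himp ω h]
  · by_cases h2 : g ω = b <;> simp [h, h2, hP0 ω]

lemma submod_push (P : Ω → ℝ) (hP : IsPMF P) (X : Ω → α) (Y : Ω → β) (Z : Ω → γ) :
    Hent (pushf P (fun ω => (X ω, Y ω, Z ω))) + Hent (pushf P Z)
      ≤ Hent (pushf P (fun ω => (X ω, Z ω))) + Hent (pushf P (fun ω => (Y ω, Z ω))) := by
  obtain ⟨hP0, hP1⟩ := hP
  have e1 : Hent (pushf P (fun ω => (X ω, Y ω, Z ω)))
      = - ∑ ω, P ω * Real.log (pushf P (fun ω => (X ω, Y ω, Z ω)) (X ω, Y ω, Z ω)) :=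
    Hent_pushf_eq_neg_sum P _
  have e2 : Hent (pushf P Z) = - ∑ ω, P ω * Real.log (pushf P Z (Z ω)) :=
    Hent_pushf_eq_neg_sum P _
  have e3 : Hent (pushf P (fun ω => (X ω, Z ω)))
      = - ∑ ω, P ω * Real.log (pushf P (fun ω => (X ω, Z ω)) (X ω, Z ω)) :=
    Hent_pushf_eq_neg_sum P _
  have e4 : Hent (pushf P (fun ω => (Y ω, Z ω)))
      = - ∑ ω, P ω * Real.log (pushf P (fun ω => (Y ω, Z ω)) (Y ω, Z ω)) :=
    Hent_pushf_eq_neg_sum P _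
  -- the ratio function on the target space
  set g : α × β × γ → ℝ := fun t =>
    pushf P (fun ω => (X ω, Z ω)) (t.1, t.2.2) * pushf P (fun ω => (Y ω, Z ω)) (t.2.1, t.2.2)
      / (pushf P (fun ω => (X ω, Y ω, Z ω)) t * pushf P Z t.2.2) with hg_def
  have hbound : ∀ ω, (P ω * Real.log (pushf P (fun ω => (X ω, Z ω)) (X ω, Z ω))
        + P ω * Real.log (pushf P (fun ω => (Y ω, Z ω)) (Y ω, Z ω))
        - P ω * Real.log (pushf P (fun ω => (X ω, Y ω, Z ω)) (X ω, Y ω, Z ω))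
        - P ω * Real.log (pushf P Z (Z ω)))
      ≤ P ω * g (X ω, Y ω, Z ω) - P ω := by
    intro ω
    rcases eq_or_lt_of_le (hP0 ω) with h0 | hpos
    · simp [← h0]
    · have l1 : 0 < pushf P (fun ω => (X ω, Y ω, Z ω)) (X ω, Y ω, Z ω) :=
        lt_of_lt_of_le hpos (le_pushf_self P hP0 _ ω)
      have l2 : 0 < pushf P (fun ω => (X ω, Z ω)) (X ω, Z ω) :=
        lt_of_lt_of_le hpos (le_pushf_self P hP0 _ ω)
      have l3 : 0 < pushf P (fun ω => (Y ω, Z ω)) (Y ω, Z ω) :=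
        lt_of_lt_of_le hpos (le_pushf_self P hP0 _ ω)
      have l4 : 0 < pushf P Z (Z ω) := lt_of_lt_of_le hpos (le_pushf_self P hP0 _ ω)
      have hrew : Real.log (g (X ω, Y ω, Z ω))
          = Real.log (pushf P (fun ω => (X ω, Z ω)) (X ω, Z ω))
            + Real.log (pushf P (fun ω => (Y ω, Z ω)) (Y ω, Z ω))
            - Real.log (pushf P (fun ω => (X ω, Y ω, Z ω)) (X ω, Y ω, Z ω))
            - Real.log (pushf P Z (Z ω)) := by
        rw [hg_def]
        rw [Real.log_div (by positivity) (by positivity),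
          Real.log_mul (ne_of_gt l2) (ne_of_gt l3), Real.log_mul (ne_of_gt l1) (ne_of_gt l4)]
        ring
      have hlog : Real.log (g (X ω, Y ω, Z ω)) ≤ g (X ω, Y ω, Z ω) - 1 := by
        refine Real.log_le_sub_one_of_pos ?_
        rw [hg_def]
        positivity
      calc (P ω * Real.log (pushf P (fun ω => (X ω, Z ω)) (X ω, Z ω))
            + P ω * Real.log (pushf P (fun ω => (Y ω, Z ω)) (Y ω, Z ω))
            - P ω * Real.log (pushf P (fun ω => (X ω, Y ω, Z ω)) (X ω, Y ω, Z ω))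
            - P ω * Real.log (pushf P Z (Z ω)))
          = P ω * Real.log (g (X ω, Y ω, Z ω)) := by rw [hrew]; ring
        _ ≤ P ω * (g (X ω, Y ω, Z ω) - 1) := by
            exact mul_le_mul_of_nonneg_left hlog (le_of_lt hpos)
        _ = P ω * g (X ω, Y ω, Z ω) - P ω := by ring
  have hsum1 : ∑ ω, P ω * g (X ω, Y ω, Z ω)
      = ∑ t, pushf P (fun ω => (X ω, Y ω, Z ω)) t * g t :=
    sum_weight_pushf P (fun ω => (X ω, Y ω, Z ω)) g
  have hsum2 : ∑ t, pushf P (fun ω => (X ω, Y ω, Z ω)) t * g t ≤ 1 := by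
    have hterm : ∀ t : α × β × γ, pushf P (fun ω => (X ω, Y ω, Z ω)) t * g t
        ≤ (if 0 < pushf P Z t.2.2 then
            pushf P (fun ω => (X ω, Z ω)) (t.1, t.2.2)
              * pushf P (fun ω => (Y ω, Z ω)) (t.2.1, t.2.2) / pushf P Z t.2.2 else 0) := by
      intro t
      rcases eq_or_lt_of_le (pushf_nonneg P hP0 (fun ω => (X ω, Y ω, Z ω)) t) with h0 | hpos
      · rw [← h0, zero_mul]
        by_cases hz : 0 < pushf P Z t.2.2
        · rw [if_pos hz]
          exact div_nonneg (mul_nonneg (pushf_nonneg P hP0 _ _) (pushf_nonneg P hP0 _ _))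
            (le_of_lt hz)
        · rw [if_neg hz]
      · have hz : 0 < pushf P Z t.2.2 :=
          lt_of_lt_of_le hpos (pushf_le_pushf P hP0 _ Z t t.2.2
            (fun ω h => by rw [← h]))
        have h1 : pushf P (fun ω => (X ω, Y ω, Z ω)) t ≠ 0 := ne_of_gt hpos
        have h2 : pushf P Z t.2.2 ≠ 0 := ne_of_gt hz
        rw [if_pos hz]
        simp only [hg_def]
        refine le_of_eq ?_
        field_simp
    have hrot : ∑ t : α × β × γ, (if 0 < pushf P Z t.2.2 then
        pushf P (fun ω => (X ω, Z ω)) (t.1, t.2.2)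
          * pushf P (fun ω => (Y ω, Z ω)) (t.2.1, t.2.2) / pushf P Z t.2.2 else 0)
        = ∑ z, ∑ x, ∑ y, (if 0 < pushf P Z z then
            pushf P (fun ω => (X ω, Z ω)) (x, z)
              * pushf P (fun ω => (Y ω, Z ω)) (y, z) / pushf P Z z else 0) := by
      rw [Fintype.sum_prod_type]
      rw [Finset.sum_congr rfl fun x _ => Fintype.sum_prod_type _]
      rw [Finset.sum_congr rfl fun x _ => Finset.sum_comm]
      exact Finset.sum_comm
    have hz_bound : ∀ z : γ, (∑ x, ∑ y, (if 0 < pushf P Z z then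
        pushf P (fun ω => (X ω, Z ω)) (x, z)
          * pushf P (fun ω => (Y ω, Z ω)) (y, z) / pushf P Z z else 0)) ≤ pushf P Z z := by
      intro z
      by_cases hz : 0 < pushf P Z z
      · simp only [if_pos hz]
        have col1 : (∑ x, pushf P (fun ω => (X ω, Z ω)) (x, z)) = pushf P Z z :=
          congrFun (marg_snd P X Z) z
        have col2 : (∑ y, pushf P (fun ω => (Y ω, Z ω)) (y, z)) = pushf P Z z :=
          congrFun (marg_snd P Y Z) z
        have : (∑ x, ∑ y, pushf P (fun ω => (X ω, Z ω)) (x, z)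
            * pushf P (fun ω => (Y ω, Z ω)) (y, z) / pushf P Z z)
            = (∑ x, pushf P (fun ω => (X ω, Z ω)) (x, z))
              * (∑ y, pushf P (fun ω => (Y ω, Z ω)) (y, z)) / pushf P Z z := by
          rw [Finset.sum_mul, Finset.sum_div]
          refine Finset.sum_congr rfl fun x _ => ?_
          rw [Finset.mul_sum, Finset.sum_div]
        rw [this, col1, col2]
        rw [show pushf P Z z * pushf P Z z / pushf P Z z = pushf P Z z from by field_simp]
      · simp only [if_neg hz]
        simp only [Finset.sum_const_zero]
        exact pushf_nonneg P hP0 Z z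
    calc ∑ t, pushf P (fun ω => (X ω, Y ω, Z ω)) t * g t
        ≤ ∑ t : α × β × γ, (if 0 < pushf P Z t.2.2 then
            pushf P (fun ω => (X ω, Z ω)) (t.1, t.2.2)
              * pushf P (fun ω => (Y ω, Z ω)) (t.2.1, t.2.2) / pushf P Z t.2.2 else 0) :=
          Finset.sum_le_sum fun t _ => hterm t
      _ = ∑ z, ∑ x, ∑ y, (if 0 < pushf P Z z then
            pushf P (fun ω => (X ω, Z ω)) (x, z)
              * pushf P (fun ω => (Y ω, Z ω)) (y, z) / pushf P Z z else 0) := hrot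
      _ ≤ ∑ z, pushf P Z z := Finset.sum_le_sum fun z _ => hz_bound z
      _ = 1 := by rw [pushf_sum, hP1]
  have key : ∑ ω, (P ω * Real.log (pushf P (fun ω => (X ω, Z ω)) (X ω, Z ω))
        + P ω * Real.log (pushf P (fun ω => (Y ω, Z ω)) (Y ω, Z ω))
        - P ω * Real.log (pushf P (fun ω => (X ω, Y ω, Z ω)) (X ω, Y ω, Z ω))
        - P ω * Real.log (pushf P Z (Z ω))) ≤ 0 := by
    calc _ ≤ ∑ ω, (P ω * g (X ω, Y ω, Z ω) - P ω) := Finset.sum_le_sum fun ω _ => hbound ω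
      _ = (∑ ω, P ω * g (X ω, Y ω, Z ω)) - ∑ ω, P ω := Finset.sum_sub_distrib _ _
      _ ≤ 1 - 1 := by rw [hP1, hsum1]; linarith [hsum2]
      _ = 0 := by ring
  rw [Finset.sum_sub_distrib, Finset.sum_sub_distrib, Finset.sum_add_distrib] at key
  linarith [key]

lemma pmf_prod_sum {α β : Type*} [Fintype α] [Fintype β] (p : α → ℝ) (q : β → ℝ)
    (hp : ∑ a, p a = 1) (hq : ∑ b, q b = 1) : ∑ x : α × β, p x.1 * q x.2 = 1 := by
  rw [Fintype.sum_prod_type]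
  have h : ∀ a, (∑ b, p a * q b) = p a := by
    intro a; rw [← Finset.mul_sum, hq, mul_one]
  rw [Finset.sum_congr rfl fun a _ => h a, hp]


section BSplits
variable {S1 S2 V α β : Type*} [Fintype S1] [Fintype S2] [Fintype V] [Fintype α] [Fintype β]
  (p1 : S1 × V → ℝ) (p2 : S2 × V → ℝ) (q1 q2 q3 : V → ℝ)
  (hp1 : IsPMF p1) (hp2 : IsPMF p2) (hq1 : IsPMF q1) (hq2 : IsPMF q2) (hq3 : IsPMF q3)

include hp1 hp2 hq1 hq2 hq3 in
lemma bsplit1 (u : (S1 × V) × V → α) (v : (S2 × V) × V × V → β) :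
    Hent (pushf (blockPMF p1 p2 q1 q2 q3)
        (fun ω => (u (ω.1, ω.2.2.2.1), v (ω.2.1, ω.2.2.1, ω.2.2.2.2))))
      = Hent (pushf (blockPMF p1 p2 q1 q2 q3) (fun ω => u (ω.1, ω.2.2.2.1)))
        + Hent (pushf (blockPMF p1 p2 q1 q2 q3) (fun ω => v (ω.2.1, ω.2.2.1, ω.2.2.2.2))) := by
  have hπ : Function.Bijective (fun ω : (S1 × V) × (S2 × V) × V × V × V =>
      (((ω.1, ω.2.2.2.1) : (S1 × V) × V),
        ((ω.2.1, ω.2.2.1, ω.2.2.2.2) : (S2 × V) × V × V))) :=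
    Function.bijective_iff_has_inverse.mpr
      ⟨fun p => (p.1.1, p.2.1, p.2.2.1, p.1.2, p.2.2.2), fun ω => rfl, fun p => rfl⟩
  exact Hent_split (blockPMF p1 p2 q1 q2 q3) _ hπ
    (fun l => p1 l.1 * q2 l.2) (fun r => p2 r.1 * (q1 r.2.1 * q3 r.2.2))
    (fun ω => by show p1 ω.1 * p2 ω.2.1 * q1 ω.2.2.1 * q2 ω.2.2.2.1 * q3 ω.2.2.2.2
                   = (p1 ω.1 * q2 ω.2.2.2.1) * (p2 ω.2.1 * (q1 ω.2.2.1 * q3 ω.2.2.2.2))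
                 ring)
    (pmf_prod_sum _ _ hp1.2 hq2.2)
    (pmf_prod_sum _ _ hp2.2 (pmf_prod_sum _ _ hq1.2 hq3.2))
    u v

include hp1 hp2 hq1 hq2 hq3 in
lemma bsplit3 (u : S1 × V → α) (v : (S2 × V) × V × V × V → β) :
    Hent (pushf (blockPMF p1 p2 q1 q2 q3) (fun ω => (u ω.1, v ω.2)))
      = Hent (pushf (blockPMF p1 p2 q1 q2 q3) (fun ω => u ω.1))
        + Hent (pushf (blockPMF p1 p2 q1 q2 q3) (fun ω => v ω.2)) := by
  have hπ : Function.Bijective (fun ω : (S1 × V) × (S2 × V) × V × V × V => (ω.1, ω.2)) :=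
    Function.bijective_iff_has_inverse.mpr ⟨fun p => (p.1, p.2), fun ω => rfl, fun p => rfl⟩
  exact Hent_split (blockPMF p1 p2 q1 q2 q3) _ hπ
    p1 (fun r => p2 r.1 * (q1 r.2.1 * (q2 r.2.2.1 * q3 r.2.2.2)))
    (fun ω => by show p1 ω.1 * p2 ω.2.1 * q1 ω.2.2.1 * q2 ω.2.2.2.1 * q3 ω.2.2.2.2
                   = p1 ω.1 * (p2 ω.2.1 * (q1 ω.2.2.1 * (q2 ω.2.2.2.1 * q3 ω.2.2.2.2)))
                 ring)
    hp1.2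
    (pmf_prod_sum _ _ hp2.2 (pmf_prod_sum _ _ hq1.2 (pmf_prod_sum _ _ hq2.2 hq3.2)))
    u v

include hp1 hp2 hq1 hq2 hq3 in
lemma bsplit2 (u : V → α) (v : (S1 × V) × (S2 × V) × V × V → β) :
    Hent (pushf (blockPMF p1 p2 q1 q2 q3)
        (fun ω => (u ω.2.2.2.1, v (ω.1, ω.2.1, ω.2.2.1, ω.2.2.2.2))))
      = Hent (pushf (blockPMF p1 p2 q1 q2 q3) (fun ω => u ω.2.2.2.1))
        + Hent (pushf (blockPMF p1 p2 q1 q2 q3) (fun ω => v (ω.1, ω.2.1, ω.2.2.1, ω.2.2.2.2))) := by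
  have hπ : Function.Bijective (fun ω : (S1 × V) × (S2 × V) × V × V × V =>
      ((ω.2.2.2.1 : V), ((ω.1, ω.2.1, ω.2.2.1, ω.2.2.2.2) : (S1 × V) × (S2 × V) × V × V))) :=
    Function.bijective_iff_has_inverse.mpr
      ⟨fun p => (p.2.1, p.2.2.1, p.2.2.2.1, p.1, p.2.2.2.2), fun ω => rfl, fun p => rfl⟩
  exact Hent_split (blockPMF p1 p2 q1 q2 q3) _ hπ
    q2 (fun r => p1 r.1 * (p2 r.2.1 * (q1 r.2.2.1 * q3 r.2.2.2)))
    (fun ω => by show p1 ω.1 * p2 ω.2.1 * q1 ω.2.2.1 * q2 ω.2.2.2.1 * q3 ω.2.2.2.2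
                   = q2 ω.2.2.2.1 * (p1 ω.1 * (p2 ω.2.1 * (q1 ω.2.2.1 * q3 ω.2.2.2.2)))
                 ring)
    hq2.2
    (pmf_prod_sum _ _ hp1.2 (pmf_prod_sum _ _ hp2.2 (pmf_prod_sum _ _ hq1.2 hq3.2)))
    u v

include hp1 hp2 hq1 hq2 hq3 in
lemma bsplit4 (u : S2 × V → α) (v : (S1 × V) × V × V × V → β) :
    Hent (pushf (blockPMF p1 p2 q1 q2 q3) (fun ω => (u ω.2.1, v (ω.1, ω.2.2))))
      = Hent (pushf (blockPMF p1 p2 q1 q2 q3) (fun ω => u ω.2.1))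
        + Hent (pushf (blockPMF p1 p2 q1 q2 q3) (fun ω => v (ω.1, ω.2.2))) := by
  have hπ : Function.Bijective (fun ω : (S1 × V) × (S2 × V) × V × V × V =>
      ((ω.2.1 : S2 × V), ((ω.1, ω.2.2) : (S1 × V) × V × V × V))) :=
    Function.bijective_iff_has_inverse.mpr
      ⟨fun p => (p.2.1, p.1, p.2.2), fun ω => rfl, fun p => rfl⟩
  exact Hent_split (blockPMF p1 p2 q1 q2 q3) _ hπ
    p2 (fun r => p1 r.1 * (q1 r.2.1 * (q2 r.2.2.1 * q3 r.2.2.2)))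
    (fun ω => by show p1 ω.1 * p2 ω.2.1 * q1 ω.2.2.1 * q2 ω.2.2.2.1 * q3 ω.2.2.2.2
                   = p2 ω.2.1 * (p1 ω.1 * (q1 ω.2.2.1 * (q2 ω.2.2.2.1 * q3 ω.2.2.2.2)))
                 ring)
    hp2.2
    (pmf_prod_sum _ _ hp1.2 (pmf_prod_sum _ _ hq1.2 (pmf_prod_sum _ _ hq2.2 hq3.2)))
    u v

include hp1 hp2 hq1 hq2 hq3 in
lemma bsplit5 (u : V → α) (v : (S1 × V) × (S2 × V) × V × V → β) :
    Hent (pushf (blockPMF p1 p2 q1 q2 q3)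
        (fun ω => (u ω.2.2.1, v (ω.1, ω.2.1, ω.2.2.2.1, ω.2.2.2.2))))
      = Hent (pushf (blockPMF p1 p2 q1 q2 q3) (fun ω => u ω.2.2.1))
        + Hent (pushf (blockPMF p1 p2 q1 q2 q3) (fun ω => v (ω.1, ω.2.1, ω.2.2.2.1, ω.2.2.2.2))) := by
  have hπ : Function.Bijective (fun ω : (S1 × V) × (S2 × V) × V × V × V =>
      ((ω.2.2.1 : V), ((ω.1, ω.2.1, ω.2.2.2.1, ω.2.2.2.2) : (S1 × V) × (S2 × V) × V × V))) :=
    Function.bijective_iff_has_inverse.mpr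
      ⟨fun p => (p.2.1, p.2.2.1, p.1, p.2.2.2.1, p.2.2.2.2), fun ω => rfl, fun p => rfl⟩
  exact Hent_split (blockPMF p1 p2 q1 q2 q3) _ hπ
    q1 (fun r => p1 r.1 * (p2 r.2.1 * (q2 r.2.2.1 * q3 r.2.2.2)))
    (fun ω => by show p1 ω.1 * p2 ω.2.1 * q1 ω.2.2.1 * q2 ω.2.2.2.1 * q3 ω.2.2.2.2
                   = q1 ω.2.2.1 * (p1 ω.1 * (p2 ω.2.1 * (q2 ω.2.2.2.1 * q3 ω.2.2.2.2)))
                 ring)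
    hq1.2
    (pmf_prod_sum _ _ hp1.2 (pmf_prod_sum _ _ hp2.2 (pmf_prod_sum _ _ hq2.2 hq3.2)))
    u v

include hp1 hp2 hq1 hq2 hq3 in
lemma bsplit6 (u : (S2 × V) × V → α) (v : (S1 × V) × V × V → β) :
    Hent (pushf (blockPMF p1 p2 q1 q2 q3)
        (fun ω => (u (ω.2.1, ω.2.2.1), v (ω.1, ω.2.2.2.1, ω.2.2.2.2))))
      = Hent (pushf (blockPMF p1 p2 q1 q2 q3) (fun ω => u (ω.2.1, ω.2.2.1)))
        + Hent (pushf (blockPMF p1 p2 q1 q2 q3) (fun ω => v (ω.1, ω.2.2.2.1, ω.2.2.2.2))) := by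
  have hπ : Function.Bijective (fun ω : (S1 × V) × (S2 × V) × V × V × V =>
      (((ω.2.1, ω.2.2.1) : (S2 × V) × V), ((ω.1, ω.2.2.2.1, ω.2.2.2.2) : (S1 × V) × V × V))) :=
    Function.bijective_iff_has_inverse.mpr
      ⟨fun p => (p.2.1, p.1.1, p.1.2, p.2.2.1, p.2.2.2), fun ω => rfl, fun p => rfl⟩
  exact Hent_split (blockPMF p1 p2 q1 q2 q3) _ hπ
    (fun l => p2 l.1 * q1 l.2) (fun r => p1 r.1 * (q2 r.2.1 * q3 r.2.2))
    (fun ω => by show p1 ω.1 * p2 ω.2.1 * q1 ω.2.2.1 * q2 ω.2.2.2.1 * q3 ω.2.2.2.2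
                   = (p2 ω.2.1 * q1 ω.2.2.1) * (p1 ω.1 * (q2 ω.2.2.2.1 * q3 ω.2.2.2.2))
                 ring)
    (pmf_prod_sum _ _ hp2.2 hq1.2)
    (pmf_prod_sum _ _ hp1.2 (pmf_prod_sum _ _ hq2.2 hq3.2))
    u v

end BSplits

end AuxLemmas

/-- Lemma 9: the entropy inequality for additive two-way wiretap channels
over a finite `F`-vector space `V` under the non-adaptive independence structure.
Here `ω = ((m₁,x₁),(m₂,x₂),n₁,n₂,n₃')`, `N₃ = (b₃/b₁)N₁ + (a₃/a₂)N₂ + N₃'`,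
`Y₁ = a₁X₁+b₁X₂+N₁`, `Y₂ = a₂X₁+b₂X₂+N₂`, `Z = a₃X₁+b₃X₂+N₃`. -/
theorem lemma9_entropy_inequality {F : Type*} [Field F]
    {V : Type*} [AddCommGroup V] [Module F V] [Fintype V]
    {S1 S2 : Type*} [Fintype S1] [Fintype S2]
    (a1 b1 a2 b2 a3 b3 : F)
    (ha1 : a1 ≠ 0) (hb1 : b1 ≠ 0) (ha2 : a2 ≠ 0) (hb2 : b2 ≠ 0) (ha3 : a3 ≠ 0) (hb3 : b3 ≠ 0)
    (p1 : S1 × V → ℝ) (p2 : S2 × V → ℝ) (q1 q2 q3 : V → ℝ)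
    (hp1 : IsPMF p1) (hp2 : IsPMF p2) (hq1 : IsPMF q1) (hq2 : IsPMF q2) (hq3 : IsPMF q3) :
    cmiInfo (pushf (blockPMF p1 p2 q1 q2 q3)
        (fun ω => (a2 • ω.1.2 + b2 • ω.2.1.2 + ω.2.2.2.1, ω.1.1, ω.2.1.2)))
      + cmiInfo (pushf (blockPMF p1 p2 q1 q2 q3)
        (fun ω => (a1 • ω.1.2 + b1 • ω.2.1.2 + ω.2.2.1, ω.2.1.1, ω.1.2)))
      - miInfo (pushf (blockPMF p1 p2 q1 q2 q3)
        (fun ω => ((ω.1.1, ω.2.1.1),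
          a3 • ω.1.2 + b3 • ω.2.1.2 +
            ((b3 * b1⁻¹) • ω.2.2.1 + (a3 * a2⁻¹) • ω.2.2.2.1 + ω.2.2.2.2))))
      ≤ Hent (pushf (blockPMF p1 p2 q1 q2 q3)
            (fun ω => a3 • ω.1.2 + (a3 * a2⁻¹) • ω.2.2.2.1))
        - Hent (pushf (blockPMF p1 p2 q1 q2 q3) (fun ω => (a3 * a2⁻¹) • ω.2.2.2.1))
        + Hent (pushf (blockPMF p1 p2 q1 q2 q3)
            (fun ω => b3 • ω.2.1.2 + (b3 * b1⁻¹) • ω.2.2.1))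
        - Hent (pushf (blockPMF p1 p2 q1 q2 q3) (fun ω => (b3 * b1⁻¹) • ω.2.2.1))
        - Hent (pushf (blockPMF p1 p2 q1 q2 q3)
            (fun ω => a3 • ω.1.2 + b3 • ω.2.1.2 +
              ((b3 * b1⁻¹) • ω.2.2.1 + (a3 * a2⁻¹) • ω.2.2.2.1 + ω.2.2.2.2)))
        + Hent (pushf (blockPMF p1 p2 q1 q2 q3)
            (fun ω => (b3 * b1⁻¹) • ω.2.2.1 + (a3 * a2⁻¹) • ω.2.2.2.1 + ω.2.2.2.2)) := by
    classical
  -- scalar identities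
  have hs1 : (a2 * a3⁻¹) * (a3 * a2⁻¹) = 1 := by field_simp
  have hs2 : (a3 * a2⁻¹) * a2 = a3 := by field_simp
  have hs3 : (b1 * b3⁻¹) * (b3 * b1⁻¹) = 1 := by field_simp
  have hs4 : (b3 * b1⁻¹) * b1 = b3 := by field_simp
  -- the pmf
  have hPP : IsPMF (blockPMF p1 p2 q1 q2 q3) := by
    constructor
    · intro ω
      exact mul_nonneg (mul_nonneg (mul_nonneg (mul_nonneg (hp1.1 _) (hp2.1 _)) (hq1.1 _))
        (hq2.1 _)) (hq3.1 _)
    · have h : ∀ ω : (S1 × V) × (S2 × V) × V × V × V, (blockPMF p1 p2 q1 q2 q3) ω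
          = p1 ω.1 * ((fun r : (S2 × V) × V × V × V =>
              p2 r.1 * (q1 r.2.1 * (q2 r.2.2.1 * q3 r.2.2.2))) ω.2) := by
        intro ω
        show p1 ω.1 * p2 ω.2.1 * q1 ω.2.2.1 * q2 ω.2.2.2.1 * q3 ω.2.2.2.2
          = p1 ω.1 * (p2 ω.2.1 * (q1 ω.2.2.1 * (q2 ω.2.2.2.1 * q3 ω.2.2.2.2)))
        ring
      rw [Finset.sum_congr rfl fun ω _ => h ω]
      exact pmf_prod_sum _ _ hp1.2
        (pmf_prod_sum _ _ hp2.2 (pmf_prod_sum _ _ hq1.2 (pmf_prod_sum _ _ hq2.2 hq3.2)))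
  -- marginal identifications
  have e11 : (fun p : V × V => ∑ b : S1, pushf (blockPMF p1 p2 q1 q2 q3) (fun ω : (S1 × V) × (S2 × V) × V × V × V => (a2 • ω.1.2 + b2 • ω.2.1.2 + ω.2.2.2.1, ω.1.1, ω.2.1.2)) (p.1, b, p.2))
      = pushf (blockPMF p1 p2 q1 q2 q3) (fun ω : (S1 × V) × (S2 × V) × V × V × V => (a2 • ω.1.2 + b2 • ω.2.1.2 + ω.2.2.2.1, ω.2.1.2)) :=
    marg3_13 (blockPMF p1 p2 q1 q2 q3) _ _ _
  have e12 : (fun p : S1 × V => ∑ a : V, pushf (blockPMF p1 p2 q1 q2 q3) (fun ω : (S1 × V) × (S2 × V) × V × V × V => (a2 • ω.1.2 + b2 • ω.2.1.2 + ω.2.2.2.1, ω.1.1, ω.2.1.2)) (a, p.1, p.2))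
      = pushf (blockPMF p1 p2 q1 q2 q3) (fun ω : (S1 × V) × (S2 × V) × V × V × V => (ω.1.1, ω.2.1.2)) :=
    marg3_23 (blockPMF p1 p2 q1 q2 q3) _ _ _
  have e13 : (fun c : V => ∑ a : V, ∑ b : S1, pushf (blockPMF p1 p2 q1 q2 q3) (fun ω : (S1 × V) × (S2 × V) × V × V × V => (a2 • ω.1.2 + b2 • ω.2.1.2 + ω.2.2.2.1, ω.1.1, ω.2.1.2)) (a, b, c))
      = pushf (blockPMF p1 p2 q1 q2 q3) (fun ω : (S1 × V) × (S2 × V) × V × V × V => ω.2.1.2) :=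
    marg3_3 (blockPMF p1 p2 q1 q2 q3) _ _ _
  have e21 : (fun p : V × V => ∑ b : S2, pushf (blockPMF p1 p2 q1 q2 q3) (fun ω : (S1 × V) × (S2 × V) × V × V × V => (a1 • ω.1.2 + b1 • ω.2.1.2 + ω.2.2.1, ω.2.1.1, ω.1.2)) (p.1, b, p.2))
      = pushf (blockPMF p1 p2 q1 q2 q3) (fun ω : (S1 × V) × (S2 × V) × V × V × V => (a1 • ω.1.2 + b1 • ω.2.1.2 + ω.2.2.1, ω.1.2)) :=
    marg3_13 (blockPMF p1 p2 q1 q2 q3) _ _ _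
  have e22 : (fun p : S2 × V => ∑ a : V, pushf (blockPMF p1 p2 q1 q2 q3) (fun ω : (S1 × V) × (S2 × V) × V × V × V => (a1 • ω.1.2 + b1 • ω.2.1.2 + ω.2.2.1, ω.2.1.1, ω.1.2)) (a, p.1, p.2))
      = pushf (blockPMF p1 p2 q1 q2 q3) (fun ω : (S1 × V) × (S2 × V) × V × V × V => (ω.2.1.1, ω.1.2)) :=
    marg3_23 (blockPMF p1 p2 q1 q2 q3) _ _ _
  have e23 : (fun c : V => ∑ a : V, ∑ b : S2, pushf (blockPMF p1 p2 q1 q2 q3) (fun ω : (S1 × V) × (S2 × V) × V × V × V => (a1 • ω.1.2 + b1 • ω.2.1.2 + ω.2.2.1, ω.2.1.1, ω.1.2)) (a, b, c))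
      = pushf (blockPMF p1 p2 q1 q2 q3) (fun ω : (S1 × V) × (S2 × V) × V × V × V => ω.1.2) :=
    marg3_3 (blockPMF p1 p2 q1 q2 q3) _ _ _
  have e31 : (fun a : S1 × S2 => ∑ b : V, pushf (blockPMF p1 p2 q1 q2 q3) (fun ω : (S1 × V) × (S2 × V) × V × V × V => ((ω.1.1, ω.2.1.1), a3 • ω.1.2 + b3 • ω.2.1.2 + ((b3 * b1⁻¹) • ω.2.2.1 + (a3 * a2⁻¹) • ω.2.2.2.1 + ω.2.2.2.2))) (a, b))
      = pushf (blockPMF p1 p2 q1 q2 q3) (fun ω : (S1 × V) × (S2 × V) × V × V × V => (ω.1.1, ω.2.1.1)) :=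
    marg_fst (blockPMF p1 p2 q1 q2 q3) _ _
  have e32 : (fun b : V => ∑ a : S1 × S2, pushf (blockPMF p1 p2 q1 q2 q3) (fun ω : (S1 × V) × (S2 × V) × V × V × V => ((ω.1.1, ω.2.1.1), a3 • ω.1.2 + b3 • ω.2.1.2 + ((b3 * b1⁻¹) • ω.2.2.1 + (a3 * a2⁻¹) • ω.2.2.2.1 + ω.2.2.2.2))) (a, b))
      = pushf (blockPMF p1 p2 q1 q2 q3) (fun ω : (S1 × V) × (S2 × V) × V × V × V => a3 • ω.1.2 + b3 • ω.2.1.2 + ((b3 * b1⁻¹) • ω.2.2.1 + (a3 * a2⁻¹) • ω.2.2.2.1 + ω.2.2.2.2)) :=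
    marg_snd (blockPMF p1 p2 q1 q2 q3) _ _
  -- I1 pieces
  have hphi1 : Function.Injective
      (fun p : V × V => (((a3 * a2⁻¹) • (p.1 - b2 • p.2), p.2) : V × V)) := by
    apply Function.LeftInverse.injective
      (g := fun p : V × V => ((a2 * a3⁻¹) • p.1 + b2 • p.2, p.2))
    intro p
    show ((a2 * a3⁻¹) • ((a3 * a2⁻¹) • (p.1 - b2 • p.2)) + b2 • p.2, p.2) = p
    rw [smul_smul, hs1, one_smul]
    exact Prod.ext (by module) rfl
  have J1 : Hent (pushf (blockPMF p1 p2 q1 q2 q3) (fun ω : (S1 × V) × (S2 × V) × V × V × V => (a3 • ω.1.2 + (a3 * a2⁻¹) • ω.2.2.2.1, ω.2.1.2))) = Hent (pushf (blockPMF p1 p2 q1 q2 q3) (fun ω : (S1 × V) × (S2 × V) × V × V × V => (a2 • ω.1.2 + b2 • ω.2.1.2 + ω.2.2.2.1, ω.2.1.2))) := by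
    have hfun : (fun ω : (S1 × V) × (S2 × V) × V × V × V =>
        (fun p : V × V => (((a3 * a2⁻¹) • (p.1 - b2 • p.2), p.2) : V × V))
          ((a2 • ω.1.2 + b2 • ω.2.1.2 + ω.2.2.2.1, ω.2.1.2)))
        = (fun ω : (S1 × V) × (S2 × V) × V × V × V => (a3 • ω.1.2 + (a3 * a2⁻¹) • ω.2.2.2.1, ω.2.1.2)) := by
      funext ω
      show ((a3 * a2⁻¹) • (a2 • ω.1.2 + b2 • ω.2.1.2 + ω.2.2.2.1 - b2 • ω.2.1.2), ω.2.1.2) = (a3 • ω.1.2 + (a3 * a2⁻¹) • ω.2.2.2.1, ω.2.1.2)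
      have h1 : a2 • ω.1.2 + b2 • ω.2.1.2 + ω.2.2.2.1 - b2 • ω.2.1.2 = a2 • ω.1.2 + ω.2.2.2.1 := by module
      rw [h1, smul_add, smul_smul, hs2]
    rw [← hfun]
    exact Hent_comp_inj _ _ _ hphi1
  have J2 : Hent (pushf (blockPMF p1 p2 q1 q2 q3) (fun ω : (S1 × V) × (S2 × V) × V × V × V => (a3 • ω.1.2 + (a3 * a2⁻¹) • ω.2.2.2.1, ω.2.1.2))) = Hent (pushf (blockPMF p1 p2 q1 q2 q3) (fun ω : (S1 × V) × (S2 × V) × V × V × V => a3 • ω.1.2 + (a3 * a2⁻¹) • ω.2.2.2.1)) + Hent (pushf (blockPMF p1 p2 q1 q2 q3) (fun ω : (S1 × V) × (S2 × V) × V × V × V => ω.2.1.2)) :=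
    bsplit1 p1 p2 q1 q2 q3 hp1 hp2 hq1 hq2 hq3
      (fun l => a3 • l.1.2 + (a3 * a2⁻¹) • l.2) (fun r => r.1.2)
  have J3 : Hent (pushf (blockPMF p1 p2 q1 q2 q3) (fun ω : (S1 × V) × (S2 × V) × V × V × V => (ω.1.1, ω.2.1.2))) = Hent (pushf (blockPMF p1 p2 q1 q2 q3) (fun ω : (S1 × V) × (S2 × V) × V × V × V => ω.1.1)) + Hent (pushf (blockPMF p1 p2 q1 q2 q3) (fun ω : (S1 × V) × (S2 × V) × V × V × V => ω.2.1.2)) :=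
    bsplit1 p1 p2 q1 q2 q3 hp1 hp2 hq1 hq2 hq3 (fun l => l.1.1) (fun r => r.1.2)
  have hphi2 : Function.Injective
      (fun p : V × S1 × V => ((((a3 * a2⁻¹) • (p.1 - b2 • p.2.2), p.2.1), p.2.2) : (V × S1) × V)) := by
    apply Function.LeftInverse.injective
      (g := fun p : (V × S1) × V => ((a2 * a3⁻¹) • p.1.1 + b2 • p.2, p.1.2, p.2))
    intro p
    show ((a2 * a3⁻¹) • ((a3 * a2⁻¹) • (p.1 - b2 • p.2.2)) + b2 • p.2.2, p.2.1, p.2.2) = p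
    rw [smul_smul, hs1, one_smul]
    exact Prod.ext (by module) rfl
  have J4 : Hent (pushf (blockPMF p1 p2 q1 q2 q3) (fun ω : (S1 × V) × (S2 × V) × V × V × V => ((a3 • ω.1.2 + (a3 * a2⁻¹) • ω.2.2.2.1, ω.1.1), ω.2.1.2))) = Hent (pushf (blockPMF p1 p2 q1 q2 q3) (fun ω : (S1 × V) × (S2 × V) × V × V × V => (a2 • ω.1.2 + b2 • ω.2.1.2 + ω.2.2.2.1, ω.1.1, ω.2.1.2))) := by
    have hfun : (fun ω : (S1 × V) × (S2 × V) × V × V × V =>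
        (fun p : V × S1 × V => ((((a3 * a2⁻¹) • (p.1 - b2 • p.2.2), p.2.1), p.2.2) : (V × S1) × V))
          ((a2 • ω.1.2 + b2 • ω.2.1.2 + ω.2.2.2.1, ω.1.1, ω.2.1.2)))
        = (fun ω : (S1 × V) × (S2 × V) × V × V × V => ((a3 • ω.1.2 + (a3 * a2⁻¹) • ω.2.2.2.1, ω.1.1), ω.2.1.2)) := by
      funext ω
      show (((a3 * a2⁻¹) • (a2 • ω.1.2 + b2 • ω.2.1.2 + ω.2.2.2.1 - b2 • ω.2.1.2), ω.1.1), ω.2.1.2) = ((a3 • ω.1.2 + (a3 * a2⁻¹) • ω.2.2.2.1, ω.1.1), ω.2.1.2)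
      have h1 : a2 • ω.1.2 + b2 • ω.2.1.2 + ω.2.2.2.1 - b2 • ω.2.1.2 = a2 • ω.1.2 + ω.2.2.2.1 := by module
      rw [h1, smul_add, smul_smul, hs2]
    rw [← hfun]
    exact Hent_comp_inj _ _ _ hphi2
  have J5 : Hent (pushf (blockPMF p1 p2 q1 q2 q3) (fun ω : (S1 × V) × (S2 × V) × V × V × V => ((a3 • ω.1.2 + (a3 * a2⁻¹) • ω.2.2.2.1, ω.1.1), ω.2.1.2))) = Hent (pushf (blockPMF p1 p2 q1 q2 q3) (fun ω : (S1 × V) × (S2 × V) × V × V × V => (a3 • ω.1.2 + (a3 * a2⁻¹) • ω.2.2.2.1, ω.1.1))) + Hent (pushf (blockPMF p1 p2 q1 q2 q3) (fun ω : (S1 × V) × (S2 × V) × V × V × V => ω.2.1.2)) :=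
    bsplit1 p1 p2 q1 q2 q3 hp1 hp2 hq1 hq2 hq3
      (fun l => ((a3 • l.1.2 + (a3 * a2⁻¹) • l.2, l.1.1) : V × S1)) (fun r => r.1.2)
  -- I2 pieces
  have hphi3 : Function.Injective
      (fun p : V × V => (((b3 * b1⁻¹) • (p.1 - a1 • p.2), p.2) : V × V)) := by
    apply Function.LeftInverse.injective
      (g := fun p : V × V => ((b1 * b3⁻¹) • p.1 + a1 • p.2, p.2))
    intro p
    show ((b1 * b3⁻¹) • ((b3 * b1⁻¹) • (p.1 - a1 • p.2)) + a1 • p.2, p.2) = p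
    rw [smul_smul, hs3, one_smul]
    exact Prod.ext (by module) rfl
  have J6 : Hent (pushf (blockPMF p1 p2 q1 q2 q3) (fun ω : (S1 × V) × (S2 × V) × V × V × V => (b3 • ω.2.1.2 + (b3 * b1⁻¹) • ω.2.2.1, ω.1.2))) = Hent (pushf (blockPMF p1 p2 q1 q2 q3) (fun ω : (S1 × V) × (S2 × V) × V × V × V => (a1 • ω.1.2 + b1 • ω.2.1.2 + ω.2.2.1, ω.1.2))) := by
    have hfun : (fun ω : (S1 × V) × (S2 × V) × V × V × V =>
        (fun p : V × V => (((b3 * b1⁻¹) • (p.1 - a1 • p.2), p.2) : V × V))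
          ((a1 • ω.1.2 + b1 • ω.2.1.2 + ω.2.2.1, ω.1.2)))
        = (fun ω : (S1 × V) × (S2 × V) × V × V × V => (b3 • ω.2.1.2 + (b3 * b1⁻¹) • ω.2.2.1, ω.1.2)) := by
      funext ω
      show ((b3 * b1⁻¹) • (a1 • ω.1.2 + b1 • ω.2.1.2 + ω.2.2.1 - a1 • ω.1.2), ω.1.2) = (b3 • ω.2.1.2 + (b3 * b1⁻¹) • ω.2.2.1, ω.1.2)
      have h1 : a1 • ω.1.2 + b1 • ω.2.1.2 + ω.2.2.1 - a1 • ω.1.2 = b1 • ω.2.1.2 + ω.2.2.1 := by module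
      rw [h1, smul_add, smul_smul, hs4]
    rw [← hfun]
    exact Hent_comp_inj _ _ _ hphi3
  have J7 : Hent (pushf (blockPMF p1 p2 q1 q2 q3) (fun ω : (S1 × V) × (S2 × V) × V × V × V => (b3 • ω.2.1.2 + (b3 * b1⁻¹) • ω.2.2.1, ω.1.2))) = Hent (pushf (blockPMF p1 p2 q1 q2 q3) (fun ω : (S1 × V) × (S2 × V) × V × V × V => b3 • ω.2.1.2 + (b3 * b1⁻¹) • ω.2.2.1)) + Hent (pushf (blockPMF p1 p2 q1 q2 q3) (fun ω : (S1 × V) × (S2 × V) × V × V × V => ω.1.2)) :=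
    bsplit6 p1 p2 q1 q2 q3 hp1 hp2 hq1 hq2 hq3
      (fun l => b3 • l.1.2 + (b3 * b1⁻¹) • l.2) (fun r => r.1.2)
  have J8 : Hent (pushf (blockPMF p1 p2 q1 q2 q3) (fun ω : (S1 × V) × (S2 × V) × V × V × V => (ω.2.1.1, ω.1.2))) = Hent (pushf (blockPMF p1 p2 q1 q2 q3) (fun ω : (S1 × V) × (S2 × V) × V × V × V => ω.2.1.1)) + Hent (pushf (blockPMF p1 p2 q1 q2 q3) (fun ω : (S1 × V) × (S2 × V) × V × V × V => ω.1.2)) :=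
    bsplit6 p1 p2 q1 q2 q3 hp1 hp2 hq1 hq2 hq3 (fun l => l.1.1) (fun r => r.1.2)
  have hphi4 : Function.Injective
      (fun p : V × S2 × V => ((((b3 * b1⁻¹) • (p.1 - a1 • p.2.2), p.2.1), p.2.2) : (V × S2) × V)) := by
    apply Function.LeftInverse.injective
      (g := fun p : (V × S2) × V => ((b1 * b3⁻¹) • p.1.1 + a1 • p.2, p.1.2, p.2))
    intro p
    show ((b1 * b3⁻¹) • ((b3 * b1⁻¹) • (p.1 - a1 • p.2.2)) + a1 • p.2.2, p.2.1, p.2.2) = p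
    rw [smul_smul, hs3, one_smul]
    exact Prod.ext (by module) rfl
  have J9 : Hent (pushf (blockPMF p1 p2 q1 q2 q3) (fun ω : (S1 × V) × (S2 × V) × V × V × V => ((b3 • ω.2.1.2 + (b3 * b1⁻¹) • ω.2.2.1, ω.2.1.1), ω.1.2))) = Hent (pushf (blockPMF p1 p2 q1 q2 q3) (fun ω : (S1 × V) × (S2 × V) × V × V × V => (a1 • ω.1.2 + b1 • ω.2.1.2 + ω.2.2.1, ω.2.1.1, ω.1.2))) := by
    have hfun : (fun ω : (S1 × V) × (S2 × V) × V × V × V =>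
        (fun p : V × S2 × V => ((((b3 * b1⁻¹) • (p.1 - a1 • p.2.2), p.2.1), p.2.2) : (V × S2) × V))
          ((a1 • ω.1.2 + b1 • ω.2.1.2 + ω.2.2.1, ω.2.1.1, ω.1.2)))
        = (fun ω : (S1 × V) × (S2 × V) × V × V × V => ((b3 • ω.2.1.2 + (b3 * b1⁻¹) • ω.2.2.1, ω.2.1.1), ω.1.2)) := by
      funext ω
      show (((b3 * b1⁻¹) • (a1 • ω.1.2 + b1 • ω.2.1.2 + ω.2.2.1 - a1 • ω.1.2), ω.2.1.1), ω.1.2) = ((b3 • ω.2.1.2 + (b3 * b1⁻¹) • ω.2.2.1, ω.2.1.1), ω.1.2)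
      have h1 : a1 • ω.1.2 + b1 • ω.2.1.2 + ω.2.2.1 - a1 • ω.1.2 = b1 • ω.2.1.2 + ω.2.2.1 := by module
      rw [h1, smul_add, smul_smul, hs4]
    rw [← hfun]
    exact Hent_comp_inj _ _ _ hphi4
  have J10 : Hent (pushf (blockPMF p1 p2 q1 q2 q3) (fun ω : (S1 × V) × (S2 × V) × V × V × V => ((b3 • ω.2.1.2 + (b3 * b1⁻¹) • ω.2.2.1, ω.2.1.1), ω.1.2))) = Hent (pushf (blockPMF p1 p2 q1 q2 q3) (fun ω : (S1 × V) × (S2 × V) × V × V × V => (b3 • ω.2.1.2 + (b3 * b1⁻¹) • ω.2.2.1, ω.2.1.1))) + Hent (pushf (blockPMF p1 p2 q1 q2 q3) (fun ω : (S1 × V) × (S2 × V) × V × V × V => ω.1.2)) :=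
    bsplit6 p1 p2 q1 q2 q3 hp1 hp2 hq1 hq2 hq3
      (fun l => ((b3 • l.1.2 + (b3 * b1⁻¹) • l.2, l.1.1) : V × S2)) (fun r => r.1.2)
  have J11 : Hent (pushf (blockPMF p1 p2 q1 q2 q3) (fun ω : (S1 × V) × (S2 × V) × V × V × V => (ω.1.1, ω.2.1.1))) = Hent (pushf (blockPMF p1 p2 q1 q2 q3) (fun ω : (S1 × V) × (S2 × V) × V × V × V => ω.1.1)) + Hent (pushf (blockPMF p1 p2 q1 q2 q3) (fun ω : (S1 × V) × (S2 × V) × V × V × V => ω.2.1.1)) :=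
    bsplit3 p1 p2 q1 q2 q3 hp1 hp2 hq1 hq2 hq3 (fun l => l.1) (fun r => r.1.1)
  -- SM1 and its identifications
  have SM1 := submod_push (blockPMF p1 p2 q1 q2 q3) hPP
    (fun ω : (S1 × V) × (S2 × V) × V × V × V => a3 • ω.1.2) (fun ω : (S1 × V) × (S2 × V) × V × V × V => a3 • ω.1.2 + (a3 * a2⁻¹) • ω.2.2.2.1) (fun ω : (S1 × V) × (S2 × V) × V × V × V => ((ω.1.1, ω.2.1.1), a3 • ω.1.2 + b3 • ω.2.1.2 + ((b3 * b1⁻¹) • ω.2.2.1 + (a3 * a2⁻¹) • ω.2.2.2.1 + ω.2.2.2.2)))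
  have hphi5 : Function.Injective
      (fun p : V × V × ((S1 × S2) × V) =>
        (((p.1, p.2.2.1.1), (p.2.1 - p.1, (p.2.2.2 - p.2.1, p.2.2.1.2)))
          : (V × S1) × V × V × S2)) := by
    apply Function.LeftInverse.injective
      (g := fun o : (V × S1) × V × V × S2 =>
        (o.1.1, o.1.1 + o.2.1, ((o.1.2, o.2.2.2), o.1.1 + o.2.1 + o.2.2.1)))
    intro p
    show (p.1, p.1 + (p.2.1 - p.1), ((p.2.2.1.1, p.2.2.1.2), p.1 + (p.2.1 - p.1) + (p.2.2.2 - p.2.1))) = p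
    exact Prod.ext rfl (Prod.ext (by module) (Prod.ext rfl (by module)))
  have J12a : Hent (pushf (blockPMF p1 p2 q1 q2 q3) (fun ω : (S1 × V) × (S2 × V) × V × V × V => ((a3 • ω.1.2, ω.1.1), (a3 * a2⁻¹) • ω.2.2.2.1, (b3 • ω.2.1.2 + ((b3 * b1⁻¹) • ω.2.2.1 + ω.2.2.2.2), ω.2.1.1))))
      = Hent (pushf (blockPMF p1 p2 q1 q2 q3) (fun ω : (S1 × V) × (S2 × V) × V × V × V => (a3 • ω.1.2, a3 • ω.1.2 + (a3 * a2⁻¹) • ω.2.2.2.1, ((ω.1.1, ω.2.1.1), a3 • ω.1.2 + b3 • ω.2.1.2 + ((b3 * b1⁻¹) • ω.2.2.1 + (a3 * a2⁻¹) • ω.2.2.2.1 + ω.2.2.2.2))))) := by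
    have hfun : (fun ω : (S1 × V) × (S2 × V) × V × V × V =>
        (fun p : V × V × ((S1 × S2) × V) =>
          (((p.1, p.2.2.1.1), (p.2.1 - p.1, (p.2.2.2 - p.2.1, p.2.2.1.2)))
            : (V × S1) × V × V × S2))
          ((a3 • ω.1.2, a3 • ω.1.2 + (a3 * a2⁻¹) • ω.2.2.2.1, ((ω.1.1, ω.2.1.1), a3 • ω.1.2 + b3 • ω.2.1.2 + ((b3 * b1⁻¹) • ω.2.2.1 + (a3 * a2⁻¹) • ω.2.2.2.1 + ω.2.2.2.2)))))
        = (fun ω : (S1 × V) × (S2 × V) × V × V × V => ((a3 • ω.1.2, ω.1.1), (a3 * a2⁻¹) • ω.2.2.2.1, (b3 • ω.2.1.2 + ((b3 * b1⁻¹) • ω.2.2.1 + ω.2.2.2.2), ω.2.1.1))) := by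
      funext ω
      show ((a3 • ω.1.2, ω.1.1), (a3 • ω.1.2 + (a3 * a2⁻¹) • ω.2.2.2.1) - (a3 • ω.1.2), ((a3 • ω.1.2 + b3 • ω.2.1.2 + ((b3 * b1⁻¹) • ω.2.2.1 + (a3 * a2⁻¹) • ω.2.2.2.1 + ω.2.2.2.2)) - (a3 • ω.1.2 + (a3 * a2⁻¹) • ω.2.2.2.1), ω.2.1.1))
        = ((a3 • ω.1.2, ω.1.1), (a3 * a2⁻¹) • ω.2.2.2.1, (b3 • ω.2.1.2 + ((b3 * b1⁻¹) • ω.2.2.1 + ω.2.2.2.2), ω.2.1.1))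
      exact Prod.ext rfl (Prod.ext (by module) (Prod.ext (by module) rfl))
    rw [← hfun]
    exact Hent_comp_inj _ _ _ hphi5
  have J12b : Hent (pushf (blockPMF p1 p2 q1 q2 q3) (fun ω : (S1 × V) × (S2 × V) × V × V × V => ((a3 • ω.1.2, ω.1.1), (a3 * a2⁻¹) • ω.2.2.2.1, (b3 • ω.2.1.2 + ((b3 * b1⁻¹) • ω.2.2.1 + ω.2.2.2.2), ω.2.1.1))))
      = Hent (pushf (blockPMF p1 p2 q1 q2 q3) (fun ω : (S1 × V) × (S2 × V) × V × V × V => (a3 • ω.1.2, ω.1.1))) + Hent (pushf (blockPMF p1 p2 q1 q2 q3) (fun ω : (S1 × V) × (S2 × V) × V × V × V => ((a3 * a2⁻¹) • ω.2.2.2.1, (b3 • ω.2.1.2 + ((b3 * b1⁻¹) • ω.2.2.1 + ω.2.2.2.2), ω.2.1.1)))) :=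
    bsplit3 p1 p2 q1 q2 q3 hp1 hp2 hq1 hq2 hq3
      (fun l => ((a3 • l.2, l.1) : V × S1))
      (fun r => (((a3 * a2⁻¹) • r.2.2.1, (b3 • r.1.2 + ((b3 * b1⁻¹) • r.2.1 + r.2.2.2), r.1.1))
        : V × V × S2))
  have J12c : Hent (pushf (blockPMF p1 p2 q1 q2 q3) (fun ω : (S1 × V) × (S2 × V) × V × V × V => ((a3 * a2⁻¹) • ω.2.2.2.1, (b3 • ω.2.1.2 + ((b3 * b1⁻¹) • ω.2.2.1 + ω.2.2.2.2), ω.2.1.1)))) = Hent (pushf (blockPMF p1 p2 q1 q2 q3) (fun ω : (S1 × V) × (S2 × V) × V × V × V => (a3 * a2⁻¹) • ω.2.2.2.1)) + Hent (pushf (blockPMF p1 p2 q1 q2 q3) (fun ω : (S1 × V) × (S2 × V) × V × V × V => (b3 • ω.2.1.2 + ((b3 * b1⁻¹) • ω.2.2.1 + ω.2.2.2.2), ω.2.1.1))) :=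
    bsplit2 p1 p2 q1 q2 q3 hp1 hp2 hq1 hq2 hq3
      (fun l => (a3 * a2⁻¹) • l)
      (fun r => ((b3 • r.2.1.2 + ((b3 * b1⁻¹) • r.2.2.1 + r.2.2.2), r.2.1.1) : V × S2))
  have hphi6 : Function.Injective
      (fun p : V × ((S1 × S2) × V) =>
        (((p.1, p.2.1.1), (p.2.2 - p.1, p.2.1.2)) : (V × S1) × V × S2)) := by
    apply Function.LeftInverse.injective
      (g := fun o : (V × S1) × V × S2 => (o.1.1, ((o.1.2, o.2.2), o.1.1 + o.2.1)))
    intro p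
    show (p.1, ((p.2.1.1, p.2.1.2), p.1 + (p.2.2 - p.1))) = p
    exact Prod.ext rfl (Prod.ext rfl (by module))
  have J13a : Hent (pushf (blockPMF p1 p2 q1 q2 q3) (fun ω : (S1 × V) × (S2 × V) × V × V × V => ((a3 • ω.1.2, ω.1.1), (b3 • ω.2.1.2 + ((b3 * b1⁻¹) • ω.2.2.1 + (a3 * a2⁻¹) • ω.2.2.2.1 + ω.2.2.2.2), ω.2.1.1)))) = Hent (pushf (blockPMF p1 p2 q1 q2 q3) (fun ω : (S1 × V) × (S2 × V) × V × V × V => (a3 • ω.1.2, ((ω.1.1, ω.2.1.1), a3 • ω.1.2 + b3 • ω.2.1.2 + ((b3 * b1⁻¹) • ω.2.2.1 + (a3 * a2⁻¹) • ω.2.2.2.1 + ω.2.2.2.2))))) := by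
    have hfun : (fun ω : (S1 × V) × (S2 × V) × V × V × V =>
        (fun p : V × ((S1 × S2) × V) =>
          (((p.1, p.2.1.1), (p.2.2 - p.1, p.2.1.2)) : (V × S1) × V × S2))
          ((a3 • ω.1.2, ((ω.1.1, ω.2.1.1), a3 • ω.1.2 + b3 • ω.2.1.2 + ((b3 * b1⁻¹) • ω.2.2.1 + (a3 * a2⁻¹) • ω.2.2.2.1 + ω.2.2.2.2)))))
        = (fun ω : (S1 × V) × (S2 × V) × V × V × V => ((a3 • ω.1.2, ω.1.1), (b3 • ω.2.1.2 + ((b3 * b1⁻¹) • ω.2.2.1 + (a3 * a2⁻¹) • ω.2.2.2.1 + ω.2.2.2.2), ω.2.1.1))) := by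
      funext ω
      show ((a3 • ω.1.2, ω.1.1), ((a3 • ω.1.2 + b3 • ω.2.1.2 + ((b3 * b1⁻¹) • ω.2.2.1 + (a3 * a2⁻¹) • ω.2.2.2.1 + ω.2.2.2.2)) - (a3 • ω.1.2), ω.2.1.1)) = ((a3 • ω.1.2, ω.1.1), (b3 • ω.2.1.2 + ((b3 * b1⁻¹) • ω.2.2.1 + (a3 * a2⁻¹) • ω.2.2.2.1 + ω.2.2.2.2), ω.2.1.1))
      exact Prod.ext rfl (Prod.ext (by module) rfl)
    rw [← hfun]
    exact Hent_comp_inj _ _ _ hphi6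
  have J13b : Hent (pushf (blockPMF p1 p2 q1 q2 q3) (fun ω : (S1 × V) × (S2 × V) × V × V × V => ((a3 • ω.1.2, ω.1.1), (b3 • ω.2.1.2 + ((b3 * b1⁻¹) • ω.2.2.1 + (a3 * a2⁻¹) • ω.2.2.2.1 + ω.2.2.2.2), ω.2.1.1))))
      = Hent (pushf (blockPMF p1 p2 q1 q2 q3) (fun ω : (S1 × V) × (S2 × V) × V × V × V => (a3 • ω.1.2, ω.1.1))) + Hent (pushf (blockPMF p1 p2 q1 q2 q3) (fun ω : (S1 × V) × (S2 × V) × V × V × V => (b3 • ω.2.1.2 + ((b3 * b1⁻¹) • ω.2.2.1 + (a3 * a2⁻¹) • ω.2.2.2.1 + ω.2.2.2.2), ω.2.1.1))) :=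
    bsplit3 p1 p2 q1 q2 q3 hp1 hp2 hq1 hq2 hq3
      (fun l => ((a3 • l.2, l.1) : V × S1))
      (fun r => ((b3 • r.1.2 + ((b3 * b1⁻¹) • r.2.1 + (a3 * a2⁻¹) • r.2.2.1 + r.2.2.2), r.1.1)
        : V × S2))
  have J14a : Hent (pushf (blockPMF p1 p2 q1 q2 q3) (fun ω : (S1 × V) × (S2 × V) × V × V × V => ((a3 • ω.1.2 + (a3 * a2⁻¹) • ω.2.2.2.1, ω.1.1), (b3 • ω.2.1.2 + ((b3 * b1⁻¹) • ω.2.2.1 + ω.2.2.2.2), ω.2.1.1)))) = Hent (pushf (blockPMF p1 p2 q1 q2 q3) (fun ω : (S1 × V) × (S2 × V) × V × V × V => (a3 • ω.1.2 + (a3 * a2⁻¹) • ω.2.2.2.1, ((ω.1.1, ω.2.1.1), a3 • ω.1.2 + b3 • ω.2.1.2 + ((b3 * b1⁻¹) • ω.2.2.1 + (a3 * a2⁻¹) • ω.2.2.2.1 + ω.2.2.2.2))))) := by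
    have hfun : (fun ω : (S1 × V) × (S2 × V) × V × V × V =>
        (fun p : V × ((S1 × S2) × V) =>
          (((p.1, p.2.1.1), (p.2.2 - p.1, p.2.1.2)) : (V × S1) × V × S2))
          ((a3 • ω.1.2 + (a3 * a2⁻¹) • ω.2.2.2.1, ((ω.1.1, ω.2.1.1), a3 • ω.1.2 + b3 • ω.2.1.2 + ((b3 * b1⁻¹) • ω.2.2.1 + (a3 * a2⁻¹) • ω.2.2.2.1 + ω.2.2.2.2)))))
        = (fun ω : (S1 × V) × (S2 × V) × V × V × V => ((a3 • ω.1.2 + (a3 * a2⁻¹) • ω.2.2.2.1, ω.1.1), (b3 • ω.2.1.2 + ((b3 * b1⁻¹) • ω.2.2.1 + ω.2.2.2.2), ω.2.1.1))) := by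
      funext ω
      show ((a3 • ω.1.2 + (a3 * a2⁻¹) • ω.2.2.2.1, ω.1.1), ((a3 • ω.1.2 + b3 • ω.2.1.2 + ((b3 * b1⁻¹) • ω.2.2.1 + (a3 * a2⁻¹) • ω.2.2.2.1 + ω.2.2.2.2)) - (a3 • ω.1.2 + (a3 * a2⁻¹) • ω.2.2.2.1), ω.2.1.1)) = ((a3 • ω.1.2 + (a3 * a2⁻¹) • ω.2.2.2.1, ω.1.1), (b3 • ω.2.1.2 + ((b3 * b1⁻¹) • ω.2.2.1 + ω.2.2.2.2), ω.2.1.1))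
      exact Prod.ext rfl (Prod.ext (by module) rfl)
    rw [← hfun]
    exact Hent_comp_inj _ _ _ hphi6
  have J14b : Hent (pushf (blockPMF p1 p2 q1 q2 q3) (fun ω : (S1 × V) × (S2 × V) × V × V × V => ((a3 • ω.1.2 + (a3 * a2⁻¹) • ω.2.2.2.1, ω.1.1), (b3 • ω.2.1.2 + ((b3 * b1⁻¹) • ω.2.2.1 + ω.2.2.2.2), ω.2.1.1))))
      = Hent (pushf (blockPMF p1 p2 q1 q2 q3) (fun ω : (S1 × V) × (S2 × V) × V × V × V => (a3 • ω.1.2 + (a3 * a2⁻¹) • ω.2.2.2.1, ω.1.1))) + Hent (pushf (blockPMF p1 p2 q1 q2 q3) (fun ω : (S1 × V) × (S2 × V) × V × V × V => (b3 • ω.2.1.2 + ((b3 * b1⁻¹) • ω.2.2.1 + ω.2.2.2.2), ω.2.1.1))) :=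
    bsplit1 p1 p2 q1 q2 q3 hp1 hp2 hq1 hq2 hq3
      (fun l => ((a3 • l.1.2 + (a3 * a2⁻¹) • l.2, l.1.1) : V × S1))
      (fun r => ((b3 • r.1.2 + ((b3 * b1⁻¹) • r.2.1 + r.2.2), r.1.1) : V × S2))
  -- SM2 and its identifications
  have SM2 := submod_push (blockPMF p1 p2 q1 q2 q3) hPP
    (fun ω : (S1 × V) × (S2 × V) × V × V × V => b3 • ω.2.1.2) (fun ω : (S1 × V) × (S2 × V) × V × V × V => b3 • ω.2.1.2 + (b3 * b1⁻¹) • ω.2.2.1) (fun ω : (S1 × V) × (S2 × V) × V × V × V => (b3 • ω.2.1.2 + ((b3 * b1⁻¹) • ω.2.2.1 + (a3 * a2⁻¹) • ω.2.2.2.1 + ω.2.2.2.2), ω.2.1.1))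
  have hphi8 : Function.Injective
      (fun p : V × V × (V × S2) =>
        (((p.1, p.2.2.2), (p.2.1 - p.1, p.2.2.1 - p.2.1)) : (V × S2) × V × V)) := by
    apply Function.LeftInverse.injective
      (g := fun o : (V × S2) × V × V =>
        (o.1.1, o.1.1 + o.2.1, (o.1.1 + o.2.1 + o.2.2, o.1.2)))
    intro p
    show (p.1, p.1 + (p.2.1 - p.1), (p.1 + (p.2.1 - p.1) + (p.2.2.1 - p.2.1), p.2.2.2)) = p
    exact Prod.ext rfl (Prod.ext (by module) (Prod.ext (by module) rfl))
  have J15a : Hent (pushf (blockPMF p1 p2 q1 q2 q3) (fun ω : (S1 × V) × (S2 × V) × V × V × V => ((b3 • ω.2.1.2, ω.2.1.1), (b3 * b1⁻¹) • ω.2.2.1, (a3 * a2⁻¹) • ω.2.2.2.1 + ω.2.2.2.2))) = Hent (pushf (blockPMF p1 p2 q1 q2 q3) (fun ω : (S1 × V) × (S2 × V) × V × V × V => (b3 • ω.2.1.2, b3 • ω.2.1.2 + (b3 * b1⁻¹) • ω.2.2.1, (b3 • ω.2.1.2 + ((b3 * b1⁻¹) • ω.2.2.1 + (a3 * a2⁻¹)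 • ω.2.2.2.1 + ω.2.2.2.2), ω.2.1.1)))) := by
    have hfun : (fun ω : (S1 × V) × (S2 × V) × V × V × V =>
        (fun p : V × V × (V × S2) =>
          (((p.1, p.2.2.2), (p.2.1 - p.1, p.2.2.1 - p.2.1)) : (V × S2) × V × V))
          ((b3 • ω.2.1.2, b3 • ω.2.1.2 + (b3 * b1⁻¹) • ω.2.2.1, (b3 • ω.2.1.2 + ((b3 * b1⁻¹) • ω.2.2.1 + (a3 * a2⁻¹) • ω.2.2.2.1 + ω.2.2.2.2), ω.2.1.1))))
        = (fun ω : (S1 × V) × (S2 × V) × V × V × V => ((b3 • ω.2.1.2, ω.2.1.1), (b3 * b1⁻¹) • ω.2.2.1, (a3 * a2⁻¹) • ω.2.2.2.1 + ω.2.2.2.2)) := by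
      funext ω
      show ((b3 • ω.2.1.2, ω.2.1.1), (b3 • ω.2.1.2 + (b3 * b1⁻¹) • ω.2.2.1) - (b3 • ω.2.1.2), (b3 • ω.2.1.2 + ((b3 * b1⁻¹) • ω.2.2.1 + (a3 * a2⁻¹) • ω.2.2.2.1 + ω.2.2.2.2)) - (b3 • ω.2.1.2 + (b3 * b1⁻¹) • ω.2.2.1))
        = ((b3 • ω.2.1.2, ω.2.1.1), (b3 * b1⁻¹) • ω.2.2.1, (a3 * a2⁻¹) • ω.2.2.2.1 + ω.2.2.2.2)
      exact Prod.ext rfl (Prod.ext (by module) (by module))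
    rw [← hfun]
    exact Hent_comp_inj _ _ _ hphi8
  have J15b : Hent (pushf (blockPMF p1 p2 q1 q2 q3) (fun ω : (S1 × V) × (S2 × V) × V × V × V => ((b3 • ω.2.1.2, ω.2.1.1), (b3 * b1⁻¹) • ω.2.2.1, (a3 * a2⁻¹) • ω.2.2.2.1 + ω.2.2.2.2)))
      = Hent (pushf (blockPMF p1 p2 q1 q2 q3) (fun ω : (S1 × V) × (S2 × V) × V × V × V => (b3 • ω.2.1.2, ω.2.1.1))) + Hent (pushf (blockPMF p1 p2 q1 q2 q3) (fun ω : (S1 × V) × (S2 × V) × V × V × V => ((b3 * b1⁻¹) • ω.2.2.1, (a3 * a2⁻¹) • ω.2.2.2.1 + ω.2.2.2.2))) :=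
    bsplit4 p1 p2 q1 q2 q3 hp1 hp2 hq1 hq2 hq3
      (fun l => ((b3 • l.2, l.1) : V × S2))
      (fun r => (((b3 * b1⁻¹) • r.2.1, (a3 * a2⁻¹) • r.2.2.1 + r.2.2.2) : V × V))
  have J15c : Hent (pushf (blockPMF p1 p2 q1 q2 q3) (fun ω : (S1 × V) × (S2 × V) × V × V × V => ((b3 * b1⁻¹) • ω.2.2.1, (a3 * a2⁻¹) • ω.2.2.2.1 + ω.2.2.2.2))) = Hent (pushf (blockPMF p1 p2 q1 q2 q3) (fun ω : (S1 × V) × (S2 × V) × V × V × V => (b3 * b1⁻¹) • ω.2.2.1)) + Hent (pushf (blockPMF p1 p2 q1 q2 q3) (fun ω : (S1 × V) × (S2 × V) × V × V × V => (a3 * a2⁻¹) • ω.2.2.2.1 + ω.2.2.2.2)) :=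
    bsplit5 p1 p2 q1 q2 q3 hp1 hp2 hq1 hq2 hq3
      (fun l => (b3 * b1⁻¹) • l)
      (fun r => (a3 * a2⁻¹) • r.2.2.1 + r.2.2.2)
  have hphi9 : Function.Injective
      (fun p : V × (V × S2) => (((p.1, p.2.2), p.2.1 - p.1) : (V × S2) × V)) := by
    apply Function.LeftInverse.injective
      (g := fun o : (V × S2) × V => (o.1.1, (o.1.1 + o.2, o.1.2)))
    intro p
    show (p.1, (p.1 + (p.2.1 - p.1), p.2.2)) = p
    exact Prod.ext rfl (Prod.ext (by module) rfl)
  have J16a : Hent (pushf (blockPMF p1 p2 q1 q2 q3) (fun ω : (S1 × V) × (S2 × V) × V × V × V => ((b3 • ω.2.1.2, ω.2.1.1), (b3 * b1⁻¹) • ω.2.2.1 + (a3 * a2⁻¹) • ω.2.2.2.1 + ω.2.2.2.2))) = Hent (pushf (blockPMF p1 p2 q1 q2 q3) (fun ω : (S1 × V) × (S2 × V) × V × V × V => (b3 • ω.2.1.2, (b3 • ω.2.1.2 + ((b3 * b1⁻¹) • ω.2.2.1 + (a3 * a2⁻¹) • ω.2.2.2.1 + ω.2.2.2.2), ω.2.1.1))))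 := by
    have hfun : (fun ω : (S1 × V) × (S2 × V) × V × V × V =>
        (fun p : V × (V × S2) => (((p.1, p.2.2), p.2.1 - p.1) : (V × S2) × V))
          ((b3 • ω.2.1.2, (b3 • ω.2.1.2 + ((b3 * b1⁻¹) • ω.2.2.1 + (a3 * a2⁻¹) • ω.2.2.2.1 + ω.2.2.2.2), ω.2.1.1))))
        = (fun ω : (S1 × V) × (S2 × V) × V × V × V => ((b3 • ω.2.1.2, ω.2.1.1), (b3 * b1⁻¹) • ω.2.2.1 + (a3 * a2⁻¹) • ω.2.2.2.1 + ω.2.2.2.2)) := by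
      funext ω
      show ((b3 • ω.2.1.2, ω.2.1.1), (b3 • ω.2.1.2 + ((b3 * b1⁻¹) • ω.2.2.1 + (a3 * a2⁻¹) • ω.2.2.2.1 + ω.2.2.2.2)) - (b3 • ω.2.1.2)) = ((b3 • ω.2.1.2, ω.2.1.1), (b3 * b1⁻¹) • ω.2.2.1 + (a3 * a2⁻¹) • ω.2.2.2.1 + ω.2.2.2.2)
      exact Prod.ext rfl (by module)
    rw [← hfun]
    exact Hent_comp_inj _ _ _ hphi9
  have J16b : Hent (pushf (blockPMF p1 p2 q1 q2 q3) (fun ω : (S1 × V) × (S2 × V) × V × V × V => ((b3 • ω.2.1.2, ω.2.1.1), (b3 * b1⁻¹) • ω.2.2.1 + (a3 * a2⁻¹) • ω.2.2.2.1 + ω.2.2.2.2))) = Hent (pushf (blockPMF p1 p2 q1 q2 q3) (fun ω : (S1 × V) × (S2 × V) × V × V × V => (b3 • ω.2.1.2, ω.2.1.1))) + Hent (pushf (blockPMF p1 p2 q1 q2 q3) (fun ω : (S1 × V) × (S2 × V) × V × V × V => (b3 * b1⁻¹) • ω.2.2.1 + (a3 * a2⁻¹) • ω.2.2.2.1 +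 ω.2.2.2.2)) :=
    bsplit4 p1 p2 q1 q2 q3 hp1 hp2 hq1 hq2 hq3
      (fun l => ((b3 • l.2, l.1) : V × S2))
      (fun r => (b3 * b1⁻¹) • r.2.1 + (a3 * a2⁻¹) • r.2.2.1 + r.2.2.2)
  have J17a : Hent (pushf (blockPMF p1 p2 q1 q2 q3) (fun ω : (S1 × V) × (S2 × V) × V × V × V => ((b3 • ω.2.1.2 + (b3 * b1⁻¹) • ω.2.2.1, ω.2.1.1), (a3 * a2⁻¹) • ω.2.2.2.1 + ω.2.2.2.2))) = Hent (pushf (blockPMF p1 p2 q1 q2 q3) (fun ω : (S1 × V) × (S2 × V) × V × V × V => (b3 • ω.2.1.2 + (b3 * b1⁻¹) • ω.2.2.1, (b3 • ω.2.1.2 + ((b3 * b1⁻¹) • ω.2.2.1 + (a3 * a2⁻¹) • ω.2.2.2.1 + ω.2.2.2.2), ω.2.1.1)))) := by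
    have hfun : (fun ω : (S1 × V) × (S2 × V) × V × V × V =>
        (fun p : V × (V × S2) => (((p.1, p.2.2), p.2.1 - p.1) : (V × S2) × V))
          ((b3 • ω.2.1.2 + (b3 * b1⁻¹) • ω.2.2.1, (b3 • ω.2.1.2 + ((b3 * b1⁻¹) • ω.2.2.1 + (a3 * a2⁻¹) • ω.2.2.2.1 + ω.2.2.2.2), ω.2.1.1))))
        = (fun ω : (S1 × V) × (S2 × V) × V × V × V => ((b3 • ω.2.1.2 + (b3 * b1⁻¹) • ω.2.2.1, ω.2.1.1), (a3 * a2⁻¹) • ω.2.2.2.1 + ω.2.2.2.2)) := by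
      funext ω
      show ((b3 • ω.2.1.2 + (b3 * b1⁻¹) • ω.2.2.1, ω.2.1.1), (b3 • ω.2.1.2 + ((b3 * b1⁻¹) • ω.2.2.1 + (a3 * a2⁻¹) • ω.2.2.2.1 + ω.2.2.2.2)) - (b3 • ω.2.1.2 + (b3 * b1⁻¹) • ω.2.2.1)) = ((b3 • ω.2.1.2 + (b3 * b1⁻¹) • ω.2.2.1, ω.2.1.1), (a3 * a2⁻¹) • ω.2.2.2.1 + ω.2.2.2.2)
      exact Prod.ext rfl (by module)
    rw [← hfun]
    exact Hent_comp_inj _ _ _ hphi9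
  have J17b : Hent (pushf (blockPMF p1 p2 q1 q2 q3) (fun ω : (S1 × V) × (S2 × V) × V × V × V => ((b3 • ω.2.1.2 + (b3 * b1⁻¹) • ω.2.2.1, ω.2.1.1), (a3 * a2⁻¹) • ω.2.2.2.1 + ω.2.2.2.2))) = Hent (pushf (blockPMF p1 p2 q1 q2 q3) (fun ω : (S1 × V) × (S2 × V) × V × V × V => (b3 • ω.2.1.2 + (b3 * b1⁻¹) • ω.2.2.1, ω.2.1.1))) + Hent (pushf (blockPMF p1 p2 q1 q2 q3) (fun ω : (S1 × V) × (S2 × V) × V × V × V => (a3 * a2⁻¹) • ω.2.2.2.1 + ω.2.2.2.2)) :=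
    bsplit6 p1 p2 q1 q2 q3 hp1 hp2 hq1 hq2 hq3
      (fun l => ((b3 • l.1.2 + (b3 * b1⁻¹) • l.2, l.1.1) : V × S2))
      (fun r => (a3 * a2⁻¹) • r.2.1 + r.2.2)
  -- finish
  unfold cmiInfo miInfo
  rw [e11, e12, e13, e21, e22, e23, e31, e32]
  linarith [SM1, SM2, J1, J2, J3, J4, J5, J6, J7, J8, J9, J10, J11, J12a, J12b, J12c,
    J13a, J13b, J14a, J14b, J15a, J15b, J15c, J16a, J16b, J17a, J17b]
end

section
/- Let F be a finite field, V a finite nontrivial F-vector space, and a₁, b₁, a₂, b₂, a₃, b₃ nonzero elements of F. Let M₁, M₂ be random variables with values in finite sets and X₁, X₂, N₁, N₂, N₃' be V-valued random variables such that the five blocks (M₁, X₁), (M₂, X₂), N₁, N₂, N₃' are mutually independent. Define N₃ := (b₃/b₁)N₁ + (a₃/a₂)N₂ + N₃', Y₁ := a₁X₁ + b₁X₂ + N₁, Y₂ := a₂X₁ + b₂X₂ + N₂, Z := a₃X₁ + b₃X₂ + N₃. Then I(M₁; Y₂ | X₂) + I(M₂; Y₁ | X₁) − I(M₁, M₂;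 Z) ≤ log|V| + H(N₃) − H(N₁) − H(N₂). -/
open scoped BigOperators Classical

set_option linter.unusedSectionVars false

namespace ML

section inj

lemma injOfLeftInv {α β : Sort*} {k : β → α} (g : α → β) (h : ∀ b, g (k b) = b) :
    Function.Injective k := fun x y hxy => by rw [← h x, ← h y, hxy]

lemma injAddLeft {A C : Type*} [AddCommGroup A] (g : C → A) :
    Function.Injective (fun p : A × C => (p.1 + g p.2, p.2)) :=
  injOfLeftInv (fun p => (p.1 - g p.2, p.2)) (fun b => by simp)

lemma injAddMid {B A C : Type*} [AddCommGroup A] (f : B → A) :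
    Function.Injective (fun p : B × A × C => (p.1, f p.1 + p.2.1, p.2.2)) :=
  injOfLeftInv (fun p => (p.1, p.2.1 - f p.1, p.2.2)) (fun b => by simp)

lemma injSmulShift {F A : Type*} [Field F] [AddCommGroup A] [Module F A] {d : F} (hd : d ≠ 0) :
    Function.Injective (fun p : A × A => (d • p.1 + p.2, p.2)) :=
  injOfLeftInv (fun p => (d⁻¹ • (p.1 - p.2), p.2))
    (fun b => by simp [smul_smul, inv_mul_cancel₀ hd])


end inj

variable {Ω α β γ : Type*} [Fintype Ω] [Fintype α] [Fintype β] [Fintype γ]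

lemma pushf_nonneg {P : Ω → ℝ} (hP : ∀ ω, 0 ≤ P ω) (f : Ω → α) (a : α) : 0 ≤ pushf P f a :=
  Finset.sum_nonneg fun ω _ => by by_cases h : f ω = a <;> simp [h, hP ω]

lemma pushf_sum {P : Ω → ℝ} (f : Ω → α) : ∑ a, pushf P f a = ∑ ω, P ω := by
  simp only [pushf]; rw [Finset.sum_comm]
  exact Finset.sum_congr rfl fun ω _ => by simp

lemma isPMF_pushf {P : Ω → ℝ} (hP : IsPMF P) (f : Ω → α) : IsPMF (pushf P f) :=
  ⟨pushf_nonneg hP.1 f, by rw [pushf_sum, hP.2]⟩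

lemma pushf_comp (P : Ω → ℝ) (f : Ω → α) (k : α → β) :
    pushf P (fun ω => k (f ω)) = pushf (pushf P f) k := by
  funext b
  show _ = ∑ a, if k a = b then pushf P f a else 0
  calc ∑ ω, (if k (f ω) = b then P ω else 0)
      = ∑ ω, ∑ a, (if k a = b then (if f ω = a then P ω else 0) else 0) := by
        refine Finset.sum_congr rfl fun ω _ => ?_
        rw [Finset.sum_eq_single (f ω)]
        · simp
        · intro c _ hc
          have : ¬ (f ω = c) := fun h => hc h.symm
          simp [this]
        · simp
    _ = ∑ a, ∑ ω, (if k a = b then (if f ω = a then P ω else 0) else 0) := Finset.sum_comm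
    _ = ∑ a, if k a = b then pushf P f a else 0 := by
        refine Finset.sum_congr rfl fun a _ => ?_
        split <;> simp [pushf]

lemma negMulLog_sum_le (s : Finset β) (f : β → ℝ) :
    (∀ b ∈ s, 0 ≤ f b) → Real.negMulLog (∑ b ∈ s, f b) ≤ ∑ b ∈ s, Real.negMulLog (f b) := by
  classical
  induction s using Finset.cons_induction with
  | empty => simp
  | cons a s' ha ih =>
    intro hx
    rw [Finset.sum_cons, Finset.sum_cons]
    have h1 : 0 ≤ f a := hx a (Finset.mem_cons_self a s')
    have h2 : 0 ≤ ∑ b ∈ s', f b := Finset.sum_nonneg fun b hb => hx b (Finset.mem_cons_of_mem hb)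
    have key : Real.negMulLog (f a + ∑ b ∈ s', f b) ≤
        Real.negMulLog (f a) + Real.negMulLog (∑ b ∈ s', f b) := by
      set x := f a; set y := ∑ b ∈ s', f b
      rcases eq_or_lt_of_le h1 with h | h
      · simp [← h]
      rcases eq_or_lt_of_le h2 with h' | h'
      · simp [← h']
      have hxy : (0:ℝ) < x + y := by linarith
      rw [Real.negMulLog, Real.negMulLog, Real.negMulLog]
      have l1 : Real.log x ≤ Real.log (x + y) := Real.log_le_log h (by linarith)
      have l2 : Real.log y ≤ Real.log (x + y) := Real.log_le_log h' (by linarith)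
      nlinarith [mul_le_mul_of_nonneg_left l1 h1, mul_le_mul_of_nonneg_left l2 h2]
    calc Real.negMulLog (f a + ∑ b ∈ s', f b)
        ≤ Real.negMulLog (f a) + Real.negMulLog (∑ b ∈ s', f b) := key
      _ ≤ _ := by
          have := ih (fun b hb => hx b (Finset.mem_cons_of_mem hb))
          linarith

/-- Data processing: entropy of a pushforward is at most the entropy. -/
lemma Hent_pushf_le {Q : α → ℝ} (hQ : ∀ a, 0 ≤ Q a) (k : α → β) :
    Hent (pushf Q k) ≤ Hent Q := by
  rw [Hent, Hent]
  have : ∀ b : β, Real.negMulLog (pushf Q k b) ≤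
      ∑ a ∈ Finset.univ.filter (fun a => k a = b), Real.negMulLog (Q a) := by
    intro b
    have : pushf Q k b = ∑ a ∈ Finset.univ.filter (fun a => k a = b), Q a := by
      simp only [pushf]; rw [Finset.sum_filter]
    rw [this]
    exact negMulLog_sum_le _ _ (fun a _ => hQ a)
  calc ∑ b, Real.negMulLog (pushf Q k b)
      ≤ ∑ b, ∑ a ∈ Finset.univ.filter (fun a => k a = b), Real.negMulLog (Q a) :=
        Finset.sum_le_sum fun b _ => this b
    _ = ∑ a, Real.negMulLog (Q a) := by
        rw [← Finset.sum_fiberwise Finset.univ k (fun a => Real.negMulLog (Q a))]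

/-- Entropy is preserved by injective pushforward. -/
lemma Hent_pushf_inj (Q : α → ℝ) {k : α → β} (hk : Function.Injective k) :
    Hent (pushf Q k) = Hent Q := by
  rw [Hent, Hent]
  have h0 : ∀ b ∉ Finset.univ.image k, Real.negMulLog (pushf Q k b) = 0 := by
    intro b hb
    have : pushf Q k b = 0 := by
      refine Finset.sum_eq_zero fun a _ => ?_
      have : k a ≠ b := fun h => hb (Finset.mem_image.mpr ⟨a, Finset.mem_univ a, h⟩)
      simp [this]
    simp [this]
  rw [← Finset.sum_subset (Finset.subset_univ (Finset.univ.image k)) (fun b _ hb => h0 b hb)]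
  rw [Finset.sum_image (fun a _ a' _ h => hk h)]
  refine Finset.sum_congr rfl fun a _ => ?_
  congr 1
  simp only [pushf]; rw [Finset.sum_eq_single a]
  · simp
  · intro c _ hc
    have : ¬ (k c = k a) := fun h => hc (hk h)
    simp [this]
  · simp


lemma le_pushf {Q : α → ℝ} (hQ : ∀ x, 0 ≤ Q x) (k : α → β) (x : α) :
    Q x ≤ pushf Q k (k x) := by
  have : Q x = (if k x = k x then Q x else 0) := by simp
  rw [this]
  exact Finset.single_le_sum (f := fun ω => if k ω = k x then Q ω else 0)
    (fun ω _ => by by_cases h : k ω = k x <;> simp [h, hQ ω]) (Finset.mem_univ x)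

/-- Gibbs' inequality. -/
lemma gibbs {P Q : α → ℝ} (hP : IsPMF P) (hQ0 : ∀ a, 0 ≤ Q a) (hQ1 : ∑ a, Q a ≤ 1)
    (habs : ∀ a, Q a = 0 → P a = 0) :
    Hent P ≤ ∑ a, -(P a * Real.log (Q a)) := by
  have key : ∀ a, Real.negMulLog (P a) + P a * Real.log (Q a) ≤ Q a - P a := by
    intro a
    rcases eq_or_lt_of_le (hP.1 a) with h | h
    · simp [← h, hQ0 a]
    · have hQpos : 0 < Q a := by
        rcases eq_or_lt_of_le (hQ0 a) with h' | h'
        · exact absurd (habs a h'.symm) (by linarith)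
        · exact h'
      rw [Real.negMulLog]
      have : -(P a) * Real.log (P a) + P a * Real.log (Q a)
          = P a * Real.log (Q a / P a) := by
        rw [Real.log_div (ne_of_gt hQpos) (ne_of_gt h)]; ring
      rw [this]
      have hlog : Real.log (Q a / P a) ≤ Q a / P a - 1 :=
        Real.log_le_sub_one_of_pos (div_pos hQpos h)
      have := mul_le_mul_of_nonneg_left hlog (le_of_lt h)
      calc P a * Real.log (Q a / P a) ≤ P a * (Q a / P a - 1) := this
        _ = Q a - P a := by field_simp
  have hsum := Finset.sum_le_sum (fun a (_ : a ∈ Finset.univ) => key a)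
  rw [Finset.sum_sub_distrib] at hsum
  rw [hP.2] at hsum
  have : Hent P + ∑ a, P a * Real.log (Q a) ≤ ∑ a, Q a - 1 := by
    rw [Hent, ← Finset.sum_add_distrib]; exact hsum
  have h2 : ∑ a, Q a - 1 ≤ 0 := by linarith
  have : Hent P ≤ - ∑ a, P a * Real.log (Q a) := by linarith
  simpa [Finset.sum_neg_distrib] using this

/-- Maximum entropy bound. -/
lemma Hent_le_log_card {P : α → ℝ} (hP : IsPMF P) :
    Hent P ≤ Real.log (Fintype.card α) := by
  have hne : Nonempty α := by
    by_contra h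
    rw [not_nonempty_iff] at h
    have h2 := hP.2
    rw [Finset.univ_eq_empty, Finset.sum_empty] at h2
    norm_num at h2
  have hcard : (0:ℝ) < Fintype.card α := by
    have := Fintype.card_pos_iff.mpr hne
    exact_mod_cast this
  have := gibbs hP (Q := fun _ => (Fintype.card α : ℝ)⁻¹)
    (fun a => by positivity)
    (by rw [Finset.sum_const, nsmul_eq_mul, Finset.card_univ, mul_inv_cancel₀ hcard.ne'])
    (fun a h => absurd h (by positivity))
  calc Hent P ≤ ∑ a, -(P a * Real.log ((Fintype.card α : ℝ)⁻¹)) := this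
    _ = Real.log (Fintype.card α) := by
        rw [Real.log_inv]
        simp only [mul_neg, neg_neg]
        rw [← Finset.sum_mul, hP.2, one_mul]

section collapse
variable (Q : α × β → ℝ) (T : α × β × γ → ℝ)

lemma c_fst (a : α) : ∑ b, Q (a, b) = pushf Q Prod.fst a := by
  simp only [pushf]
  rw [Fintype.sum_prod_type]
  rw [Finset.sum_eq_single a]
  · refine Finset.sum_congr rfl fun b _ => by simp
  · intro x _ hx
    exact Finset.sum_eq_zero fun y _ => by simp [hx]
  · simp

lemma c_snd (b : β) : ∑ a, Q (a, b) = pushf Q Prod.snd b := by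
  simp only [pushf]
  rw [Fintype.sum_prod_type]
  refine Finset.sum_congr rfl fun a _ => ?_
  rw [Finset.sum_eq_single b] <;> simp +contextual

lemma c_13 (a : α) (c : γ) :
    ∑ b, T (a, b, c) = pushf T (fun q => (q.1, q.2.2)) (a, c) := by
  simp only [pushf]
  rw [Fintype.sum_prod_type]
  rw [Finset.sum_eq_single a]
  · rw [Fintype.sum_prod_type]
    refine Finset.sum_congr rfl fun b _ => ?_
    rw [Finset.sum_eq_single c] <;> simp +contextual [Prod.ext_iff]
  · intro x _ hx
    rw [Fintype.sum_prod_type]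
    exact Finset.sum_eq_zero fun y _ => Finset.sum_eq_zero fun z _ => by
      simp [Prod.ext_iff, hx]
  · simp

lemma c_23 (b : β) (c : γ) :
    ∑ a, T (a, b, c) = pushf T Prod.snd (b, c) := by
  simp only [pushf]
  rw [Fintype.sum_prod_type]
  refine Finset.sum_congr rfl fun a _ => ?_
  rw [Fintype.sum_prod_type]
  rw [Finset.sum_eq_single b]
  · rw [Finset.sum_eq_single c] <;> simp +contextual [Prod.ext_iff]
  · intro y _ hy
    exact Finset.sum_eq_zero fun z _ => by simp [Prod.ext_iff, hy]
  · simp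

lemma c_3 (c : γ) : ∑ a, ∑ b, T (a, b, c) = pushf T (fun q => q.2.2) c := by
  simp only [pushf]
  rw [Fintype.sum_prod_type]
  refine Finset.sum_congr rfl fun a _ => ?_
  rw [Fintype.sum_prod_type]
  refine Finset.sum_congr rfl fun b _ => ?_
  rw [Finset.sum_eq_single c] <;> simp +contextual

end collapse

/-- Subadditivity of entropy. -/
lemma subadd {Q : α × β → ℝ} (hQ : IsPMF Q) :
    Hent Q ≤ Hent (pushf Q Prod.fst) + Hent (pushf Q Prod.snd) := by
  set F := pushf Q Prod.fst with hF
  set S := pushf Q Prod.snd with hS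
  have hFp := isPMF_pushf hQ Prod.fst
  have hSp := isPMF_pushf hQ Prod.snd
  have habs : ∀ p : α × β, F p.1 * S p.2 = 0 → Q p = 0 := by
    rintro ⟨a, b⟩ h
    rcases mul_eq_zero.mp h with h | h
    · have h1 : Q (a, b) ≤ F a := le_pushf hQ.1 Prod.fst (a, b)
      have h2 := hQ.1 (a, b)
      rw [show F (a, b).1 = F a from rfl] at h
      linarith
    · have h1 : Q (a, b) ≤ S b := le_pushf hQ.1 Prod.snd (a, b)
      have h2 := hQ.1 (a, b)
      rw [show S (a, b).2 = S b from rfl] at h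
      linarith
  have hsum : ∑ p : α × β, F p.1 * S p.2 ≤ 1 := by
    rw [Fintype.sum_prod_type]
    have : ∀ a, ∑ b, F a * S b = F a := by
      intro a; rw [← Finset.mul_sum, hSp.2, mul_one]
    rw [Finset.sum_congr rfl (fun a _ => this a), hFp.2]
  have hg := gibbs hQ (Q := fun p => F p.1 * S p.2)
    (fun p => mul_nonneg (hFp.1 p.1) (hSp.1 p.2)) hsum habs
  have hsplit : ∑ p : α × β, -(Q p * Real.log (F p.1 * S p.2))
      = Hent F + Hent S := by
    have term : ∀ p : α × β, -(Q p * Real.log (F p.1 * S p.2))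
        = -(Q p * Real.log (F p.1)) + -(Q p * Real.log (S p.2)) := by
      intro p
      by_cases hq : Q p = 0
      · simp [hq]
      · have hF0 : F p.1 ≠ 0 := fun h => hq (habs p (by rw [h, zero_mul]))
        have hS0 : S p.2 ≠ 0 := fun h => hq (habs p (by rw [h, mul_zero]))
        rw [Real.log_mul hF0 hS0]; ring
    rw [Finset.sum_congr rfl (fun p _ => term p), Finset.sum_add_distrib]
    congr 1
    · rw [Hent, Fintype.sum_prod_type]
      refine Finset.sum_congr rfl fun a _ => ?_
      dsimp only
      rw [Finset.sum_neg_distrib, ← Finset.sum_mul]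
      rw [show ∑ b, Q (a, b) = F a from c_fst Q a]
      rw [Real.negMulLog]; ring
    · rw [Hent, Fintype.sum_prod_type, Finset.sum_comm]
      refine Finset.sum_congr rfl fun b _ => ?_
      dsimp only
      rw [Finset.sum_neg_distrib, ← Finset.sum_mul]
      rw [show ∑ a, Q (a, b) = S b from c_snd Q b]
      rw [Real.negMulLog]; ring
  linarith [hg, hsplit.le, hsplit.ge]


/-- Submodularity: `I(α;β|γ) ≥ 0`, i.e. `H(T) + H(γ) ≤ H(α,γ) + H(β,γ)`. -/
lemma submod {T : α × β × γ → ℝ} (hT : IsPMF T) :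
    Hent T + Hent (pushf T (fun q => q.2.2))
      ≤ Hent (pushf T (fun q => (q.1, q.2.2))) + Hent (pushf T Prod.snd) := by
  set A := pushf T (fun q => (q.1, q.2.2)) with hA
  set B := pushf T Prod.snd with hB
  set C := pushf T (fun q => q.2.2) with hC
  have hAp : IsPMF A := isPMF_pushf hT _
  have hBp : IsPMF B := isPMF_pushf hT _
  have hCp : IsPMF C := isPMF_pushf hT _
  have hTA : ∀ p : α × β × γ, T p ≤ A (p.1, p.2.2) :=
    fun p => le_pushf hT.1 (fun q => (q.1, q.2.2)) p
  have hTB : ∀ p : α × β × γ, T p ≤ B p.2 := fun p => le_pushf hT.1 Prod.snd p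
  have hTC : ∀ p : α × β × γ, T p ≤ C p.2.2 := fun p => le_pushf hT.1 (fun q => q.2.2) p
  have hAC : ∀ c, ∑ a, A (a, c) = C c := by
    intro c
    rw [c_snd A c, hA, ← pushf_comp]
  have hBC : ∀ c, ∑ b, B (b, c) = C c := by
    intro c
    rw [c_snd B c, hB, ← pushf_comp]
  set Qh : α × β × γ → ℝ :=
    fun p => if C p.2.2 = 0 then 0 else A (p.1, p.2.2) * B p.2 / C p.2.2 with hQh
  have hQh0 : ∀ p, 0 ≤ Qh p := by
    intro p
    rw [hQh]
    dsimp only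
    split
    · exact le_refl 0
    · rename_i h
      exact div_nonneg (mul_nonneg (hAp.1 _) (hBp.1 _)) (hCp.1 _)
  have hQh1 : ∑ p, Qh p ≤ 1 := by
    have reorg : ∑ p : α × β × γ, Qh p = ∑ c, ∑ a, ∑ b, Qh (a, b, c) := by
      rw [Fintype.sum_prod_type]
      calc ∑ a, ∑ q : β × γ, Qh (a, q)
          = ∑ a, ∑ b, ∑ c, Qh (a, b, c) := by
            refine Finset.sum_congr rfl fun a _ => by rw [Fintype.sum_prod_type]
        _ = ∑ a, ∑ c, ∑ b, Qh (a, b, c) := by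
            refine Finset.sum_congr rfl fun a _ => Finset.sum_comm
        _ = ∑ c, ∑ a, ∑ b, Qh (a, b, c) := Finset.sum_comm
    rw [reorg]
    have percl : ∀ c, ∑ a, ∑ b, Qh (a, b, c) ≤ C c := by
      intro c
      by_cases hc : C c = 0
      · have : ∀ a b, Qh (a, b, c) = 0 := by
          intro a b; rw [hQh]; dsimp only; rw [if_pos hc]
        rw [Finset.sum_congr rfl (fun a _ => Finset.sum_congr rfl (fun b _ => this a b))]
        simp [hCp.1 c]
      · have : ∀ a b, Qh (a, b, c) = A (a, c) * B (b, c) / C c := by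
          intro a b; rw [hQh]; dsimp only; rw [if_neg hc]
        rw [Finset.sum_congr rfl (fun a _ => Finset.sum_congr rfl (fun b _ => this a b))]
        have : ∑ a, ∑ b, A (a, c) * B (b, c) / C c = (∑ a, A (a,c)) * (∑ b, B (b,c)) / C c := by
          rw [Finset.sum_mul, Finset.sum_div]
          refine Finset.sum_congr rfl fun a _ => ?_
          rw [← Finset.sum_div, ← Finset.mul_sum]
        rw [this, hAC, hBC]
        rw [div_le_iff₀ (lt_of_le_of_ne (hCp.1 c) (Ne.symm hc))]
    calc ∑ c, ∑ a, ∑ b, Qh (a, b, c) ≤ ∑ c, C c := Finset.sum_le_sum fun c _ => percl c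
      _ = 1 := hCp.2
  have habs : ∀ p, Qh p = 0 → T p = 0 := by
    intro p h
    rw [hQh] at h
    dsimp only at h
    by_cases hc : C p.2.2 = 0
    · linarith [hTC p, hT.1 p, hc ▸ hTC p]
    · rw [if_neg hc] at h
      rcases div_eq_zero_iff.mp h with h | h
      · rcases mul_eq_zero.mp h with h | h
        · linarith [hTA p, hT.1 p, h ▸ hTA p]
        · linarith [hTB p, hT.1 p, h ▸ hTB p]
      · exact absurd h hc
  have hg := gibbs hT hQh0 hQh1 habs
  have termeq : ∀ p, -(T p * Real.log (Qh p))
      = -(T p * Real.log (A (p.1, p.2.2))) + -(T p * Real.log (B p.2))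
        - -(T p * Real.log (C p.2.2)) := by
    intro p
    by_cases ht : T p = 0
    · simp [ht]
    · have hTpos : 0 < T p := lt_of_le_of_ne (hT.1 p) (Ne.symm ht)
      have hApos : 0 < A (p.1, p.2.2) := lt_of_lt_of_le hTpos (hTA p)
      have hBpos : 0 < B p.2 := lt_of_lt_of_le hTpos (hTB p)
      have hCpos : 0 < C p.2.2 := lt_of_lt_of_le hTpos (hTC p)
      rw [hQh]
      dsimp only
      rw [if_neg hCpos.ne']
      rw [Real.log_div (mul_ne_zero hApos.ne' hBpos.ne') hCpos.ne',
        Real.log_mul hApos.ne' hBpos.ne']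
      ring
  have hSA : ∑ p : α × β × γ, -(T p * Real.log (A (p.1, p.2.2))) = Hent A := by
    rw [Hent]
    rw [show (∑ p : α × γ, Real.negMulLog (A p)) = ∑ a, ∑ c, Real.negMulLog (A (a, c)) from
      Fintype.sum_prod_type _]
    rw [Fintype.sum_prod_type]
    refine Finset.sum_congr rfl fun a _ => ?_
    rw [Fintype.sum_prod_type]
    rw [Finset.sum_comm]
    refine Finset.sum_congr rfl fun c _ => ?_
    dsimp only
    rw [Finset.sum_neg_distrib, ← Finset.sum_mul, c_13 T a c, ← hA, Real.negMulLog]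
    ring
  have hSB : ∑ p : α × β × γ, -(T p * Real.log (B p.2)) = Hent B := by
    rw [Hent]
    rw [show (∑ q : β × γ, Real.negMulLog (B q)) = ∑ b, ∑ c, Real.negMulLog (B (b, c)) from
      Fintype.sum_prod_type _]
    rw [Fintype.sum_prod_type]
    rw [show (∑ a, ∑ q : β × γ, -(T (a, q) * Real.log (B (a, q).2)))
        = ∑ q : β × γ, ∑ a, -(T (a, q) * Real.log (B (a, q).2)) from Finset.sum_comm]
    rw [Fintype.sum_prod_type]
    refine Finset.sum_congr rfl fun b _ => ?_
    refine Finset.sum_congr rfl fun c _ => ?_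
    dsimp only
    rw [Finset.sum_neg_distrib, ← Finset.sum_mul, c_23 T b c, ← hB, Real.negMulLog]
    ring
  have hSC : ∑ p : α × β × γ, -(T p * Real.log (C p.2.2)) = Hent C := by
    rw [Hent]
    rw [Fintype.sum_prod_type]
    rw [show (∑ a, ∑ q : β × γ, -(T (a, q) * Real.log (C (a, q).2.2)))
        = ∑ q : β × γ, ∑ a, -(T (a, q) * Real.log (C (a, q).2.2)) from Finset.sum_comm]
    rw [Fintype.sum_prod_type]
    rw [show (∑ b, ∑ c, ∑ a, -(T (a, (b, c)) * Real.log (C (a, (b, c)).2.2)))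
        = ∑ c, ∑ b, ∑ a, -(T (a, (b, c)) * Real.log (C (a, (b, c)).2.2)) from Finset.sum_comm]
    refine Finset.sum_congr rfl fun c _ => ?_
    have inner : ∀ b, ∑ a, -(T (a, (b, c)) * Real.log (C (a, (b, c)).2.2))
        = -(B (b, c) * Real.log (C c)) := by
      intro b
      dsimp only
      rw [Finset.sum_neg_distrib, ← Finset.sum_mul, c_23 T b c, ← hB]
    rw [Finset.sum_congr rfl fun b _ => inner b]
    rw [Finset.sum_neg_distrib, ← Finset.sum_mul, hBC c, Real.negMulLog]
    ring
  have hsplit : ∑ p : α × β × γ, -(T p * Real.log (Qh p)) = Hent A + Hent B - Hent C := by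
    rw [Finset.sum_congr rfl fun p _ => termeq p]
    rw [Finset.sum_sub_distrib, Finset.sum_add_distrib, hSA, hSB, hSC]
  linarith [hg, hsplit.le, hsplit.ge]


/-- Entropy of a product pmf is the sum of entropies. -/
lemma Hent_prod {R : α → ℝ} {S : β → ℝ} (hR : IsPMF R) (hS : IsPMF S) :
    Hent (fun p : α × β => R p.1 * S p.2) = Hent R + Hent S := by
  rw [Hent, Fintype.sum_prod_type]
  have inner : ∀ a, ∑ b, Real.negMulLog (R a * S b)
      = Real.negMulLog (R a) + R a * Hent S := by
    intro a
    have : ∀ b, Real.negMulLog (R a * S b)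
        = S b * Real.negMulLog (R a) + R a * Real.negMulLog (S b) :=
      fun b => Real.negMulLog_mul (R a) (S b)
    rw [Finset.sum_congr rfl fun b _ => this b, Finset.sum_add_distrib,
      ← Finset.sum_mul, hS.2, one_mul, ← Finset.mul_sum, Hent]
  rw [Finset.sum_congr rfl fun a _ => inner a, Finset.sum_add_distrib, ← Finset.sum_mul,
    hR.2, one_mul, Hent]
  rw [Hent]

section prod
variable {ΩA ΩB : Type*} [Fintype ΩA] [Fintype ΩB]
variable {P : Ω → ℝ} {PA : ΩA → ℝ} {PB : ΩB → ℝ}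

lemma prodPush (e : Ω ≃ ΩA × ΩB) (hfact : ∀ ω, P ω = PA (e ω).1 * PB (e ω).2)
    (f : ΩA → α) (g : ΩB → β) :
    pushf P (fun ω => (f (e ω).1, g (e ω).2))
      = fun p : α × β => pushf PA f p.1 * pushf PB g p.2 := by
  funext p
  rcases p with ⟨a, b⟩
  show _ = pushf PA f a * pushf PB g b
  simp only [pushf]
  refine Eq.trans (Fintype.sum_equiv e _
      (fun q : ΩA × ΩB => (if f q.1 = a then PA q.1 else 0) * (if g q.2 = b then PB q.2 else 0))
      fun ω => ?_) ?_
  · rw [hfact ω]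
    by_cases h1 : f (e ω).1 = a <;> by_cases h2 : g (e ω).2 = b <;>
      simp [h1, h2, Prod.ext_iff]
  · rw [Fintype.sum_prod_type, Finset.sum_mul]
    refine Finset.sum_congr rfl fun x _ => ?_
    dsimp only
    exact (Finset.mul_sum Finset.univ (fun y => if g y = b then PB y else 0) (if f x = a then PA x else 0)).symm

lemma prodMarg1 (hB : IsPMF PB) (e : Ω ≃ ΩA × ΩB)
    (hfact : ∀ ω, P ω = PA (e ω).1 * PB (e ω).2) (f : ΩA → α) :
    pushf P (fun ω => f (e ω).1) = pushf PA f := by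
  funext a
  simp only [pushf]
  refine Eq.trans (Fintype.sum_equiv e _
      (fun q : ΩA × ΩB => (if f q.1 = a then PA q.1 else 0) * PB q.2)
      fun ω => ?_) ?_
  · rw [hfact ω]
    by_cases h1 : f (e ω).1 = a <;> simp [h1]
  · rw [Fintype.sum_prod_type]
    refine Finset.sum_congr rfl fun x _ => ?_
    dsimp only
    exact (Finset.mul_sum Finset.univ PB (if f x = a then PA x else 0)).symm.trans (by rw [hB.2, mul_one])

lemma prodMarg2 (hA : IsPMF PA) (e : Ω ≃ ΩA × ΩB)
    (hfact : ∀ ω, P ω = PA (e ω).1 * PB (e ω).2) (g : ΩB → β) :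
    pushf P (fun ω => g (e ω).2) = pushf PB g := by
  funext b
  simp only [pushf]
  refine Eq.trans (Fintype.sum_equiv e _
      (fun q : ΩA × ΩB => PA q.1 * (if g q.2 = b then PB q.2 else 0))
      fun ω => ?_) ?_
  · rw [hfact ω]
    by_cases h2 : g (e ω).2 = b <;> simp [h2]
  · rw [Fintype.sum_prod_type, Finset.sum_comm]
    refine Finset.sum_congr rfl fun y _ => ?_
    dsimp only
    exact (Finset.sum_mul Finset.univ PA (if g y = b then PB y else 0)).symm.trans (by rw [hA.2, one_mul])

/-- Independence: entropy of a pair of functions of independent components is the sum. -/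
lemma prodEnt (hA : IsPMF PA) (hB : IsPMF PB) (e : Ω ≃ ΩA × ΩB)
    (hfact : ∀ ω, P ω = PA (e ω).1 * PB (e ω).2) (f : ΩA → α) (g : ΩB → β) :
    Hent (pushf P (fun ω => (f (e ω).1, g (e ω).2)))
      = Hent (pushf P (fun ω => f (e ω).1)) + Hent (pushf P (fun ω => g (e ω).2)) := by
  rw [prodPush e hfact f g, prodMarg1 hB e hfact f, prodMarg2 hA e hfact g]
  exact Hent_prod (isPMF_pushf hA f) (isPMF_pushf hB g)

end prod


section app
variable {P : Ω → ℝ}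

lemma isPMF_mul {p : α → ℝ} {q : β → ℝ} (hp : IsPMF p) (hq : IsPMF q) :
    IsPMF (fun x : α × β => p x.1 * q x.2) := by
  constructor
  · intro x; exact mul_nonneg (hp.1 x.1) (hq.1 x.2)
  · rw [Fintype.sum_prod_type]
    have : ∀ a, ∑ b, p a * q b = p a := by
      intro a; rw [← Finset.mul_sum, hq.2, mul_one]
    rw [Finset.sum_congr rfl fun a _ => this a, hp.2]

lemma Hinj' {X : Ω → α} {Y : Ω → β} (k : β → α) (hk : Function.Injective k)
    (h : ∀ ω, X ω = k (Y ω)) : Hent (pushf P X) = Hent (pushf P Y) := by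
  rw [funext h, pushf_comp]
  exact Hent_pushf_inj _ hk

lemma subadd' (hP : IsPMF P) (X : Ω → α) (Y : Ω → β) :
    Hent (pushf P (fun ω => (X ω, Y ω)))
      ≤ Hent (pushf P X) + Hent (pushf P Y) := by
  have h := subadd (isPMF_pushf hP (fun ω => (X ω, Y ω)))
  have e1 : pushf (pushf P (fun ω => (X ω, Y ω))) Prod.fst = pushf P X :=
    (pushf_comp P (fun ω => (X ω, Y ω)) Prod.fst).symm
  have e2 : pushf (pushf P (fun ω => (X ω, Y ω))) Prod.snd = pushf P Y :=
    (pushf_comp P (fun ω => (X ω, Y ω)) Prod.snd).symm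
  rw [e1, e2] at h
  exact h

lemma submod' (hP : IsPMF P) (X : Ω → α) (Y : Ω → β) (W : Ω → γ) :
    Hent (pushf P (fun ω => (X ω, Y ω, W ω))) + Hent (pushf P W)
      ≤ Hent (pushf P (fun ω => (X ω, W ω))) + Hent (pushf P (fun ω => (Y ω, W ω))) := by
  have h := submod (isPMF_pushf hP (fun ω => (X ω, Y ω, W ω)))
  have e3 : pushf (pushf P (fun ω => (X ω, Y ω, W ω))) (fun q => q.2.2) = pushf P W :=
    (pushf_comp P (fun ω => (X ω, Y ω, W ω)) (fun q : α × β × γ => q.2.2)).symm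
  have e13 : pushf (pushf P (fun ω => (X ω, Y ω, W ω))) (fun q => (q.1, q.2.2))
      = pushf P (fun ω => (X ω, W ω)) :=
    (pushf_comp P (fun ω => (X ω, Y ω, W ω)) (fun q : α × β × γ => (q.1, q.2.2))).symm
  have e23 : pushf (pushf P (fun ω => (X ω, Y ω, W ω))) Prod.snd
      = pushf P (fun ω => (Y ω, W ω)) :=
    (pushf_comp P (fun ω => (X ω, Y ω, W ω)) (Prod.snd : α × β × γ → β × γ)).symm
  rw [e3, e13, e23] at h
  exact h

lemma cmi_eq (P : Ω → ℝ) (X : Ω → α) (Y : Ω → β) (W : Ω → γ) :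
    cmiInfo (pushf P (fun ω => (X ω, Y ω, W ω)))
      = Hent (pushf P (fun ω => (X ω, W ω))) + Hent (pushf P (fun ω => (Y ω, W ω)))
        - Hent (pushf P W) - Hent (pushf P (fun ω => (X ω, Y ω, W ω))) := by
  rw [cmiInfo]
  have h1 : (fun p : α × γ => ∑ b, (pushf P (fun ω => (X ω, Y ω, W ω))) (p.1, b, p.2))
      = pushf P (fun ω => (X ω, W ω)) := by
    funext p
    exact (c_13 (pushf P (fun ω => (X ω, Y ω, W ω))) p.1 p.2).trans
      (congrFun (pushf_comp P (fun ω => (X ω, Y ω, W ω))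
        (fun q : α × β × γ => (q.1, q.2.2))).symm (p.1, p.2))
  have h2 : (fun p : β × γ => ∑ a, (pushf P (fun ω => (X ω, Y ω, W ω))) (a, p.1, p.2))
      = pushf P (fun ω => (Y ω, W ω)) := by
    funext p
    exact (c_23 (pushf P (fun ω => (X ω, Y ω, W ω))) p.1 p.2).trans
      (congrFun (pushf_comp P (fun ω => (X ω, Y ω, W ω))
        (Prod.snd : α × β × γ → β × γ)).symm (p.1, p.2))
  have h3 : (fun c : γ => ∑ a, ∑ b, (pushf P (fun ω => (X ω, Y ω, W ω))) (a, b, c))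
      = pushf P W := by
    funext c
    exact (c_3 (pushf P (fun ω => (X ω, Y ω, W ω))) c).trans
      (congrFun (pushf_comp P (fun ω => (X ω, Y ω, W ω))
        (fun q : α × β × γ => q.2.2)).symm c)
  rw [h1, h2, h3]

lemma mi_eq (P : Ω → ℝ) (X : Ω → α) (Y : Ω → β) :
    miInfo (pushf P (fun ω => (X ω, Y ω)))
      = Hent (pushf P X) + Hent (pushf P Y) - Hent (pushf P (fun ω => (X ω, Y ω))) := by
  rw [miInfo]
  have h1 : (fun a : α => ∑ b, (pushf P (fun ω => (X ω, Y ω))) (a, b)) = pushf P X := by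
    funext a
    exact (c_fst (pushf P (fun ω => (X ω, Y ω))) a).trans
      (congrFun (pushf_comp P (fun ω => (X ω, Y ω)) (Prod.fst : α × β → α)).symm a)
  have h2 : (fun b : β => ∑ a, (pushf P (fun ω => (X ω, Y ω))) (a, b)) = pushf P Y := by
    funext b
    exact (c_snd (pushf P (fun ω => (X ω, Y ω))) b).trans
      (congrFun (pushf_comp P (fun ω => (X ω, Y ω)) (Prod.snd : α × β → β)).symm b)
  rw [h1, h2]

end app

end ML

section equivs
variable (S1 S2 V : Type*)

def eq1 : ((S1 × V) × (S2 × V) × V × V × V) ≃ (((S1 × V) × V) × ((S2 × V) × V × V)) :=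
  ⟨fun ω => ((ω.1, ω.2.2.2.1), (ω.2.1, ω.2.2.1, ω.2.2.2.2)),
   fun p => (p.1.1, p.2.1, p.2.2.1, p.1.2, p.2.2.2), fun _ => rfl, fun _ => rfl⟩

def eq4 : ((S1 × V) × (S2 × V) × V × V × V) ≃ ((S2 × V) × ((S1 × V) × V × V × V)) :=
  ⟨fun ω => (ω.2.1, (ω.1, ω.2.2)), fun p => (p.2.1, p.1, p.2.2), fun _ => rfl, fun _ => rfl⟩

def eq5 : ((S1 × V) × (S2 × V) × V × V × V) ≃ (((S2 × V) × V) × ((S1 × V) × V × V)) :=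
  ⟨fun ω => ((ω.2.1, ω.2.2.1), (ω.1, ω.2.2.2.1, ω.2.2.2.2)),
   fun p => (p.2.1, p.1.1, p.1.2, p.2.2.1, p.2.2.2), fun _ => rfl, fun _ => rfl⟩

end equivs





set_option maxHeartbeats 4000000 in
/-- the multi-letter sum-rate converse bound for additive two-way wiretap
channels over a finite nontrivial `F`-vector space `V`:
`I(M₁;Y₂|X₂) + I(M₂;Y₁|X₁) − I(M₁,M₂;Z) ≤ log|V| + H(N₃) − H(N₁) − H(N₂)`.
Here `ω = ((m₁,x₁),(m₂,x₂),n₁,n₂,n₃')`, `N₃ = (b₃/b₁)N₁ + (a₃/a₂)N₂ + N₃'`,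
`Y₁ = a₁X₁+b₁X₂+N₁`, `Y₂ = a₂X₁+b₂X₂+N₂`, `Z = a₃X₁+b₃X₂+N₃`. -/
theorem multiletter_sum_rate_bound {F : Type*} [Field F]
    {V : Type*} [AddCommGroup V] [Module F V] [Fintype V] [Nontrivial V]
    {S1 S2 : Type*} [Fintype S1] [Fintype S2]
    (a1 b1 a2 b2 a3 b3 : F)
    (ha1 : a1 ≠ 0) (hb1 : b1 ≠ 0) (ha2 : a2 ≠ 0) (hb2 : b2 ≠ 0) (ha3 : a3 ≠ 0) (hb3 : b3 ≠ 0)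
    (p1 : S1 × V → ℝ) (p2 : S2 × V → ℝ) (q1 q2 q3 : V → ℝ)
    (hp1 : IsPMF p1) (hp2 : IsPMF p2) (hq1 : IsPMF q1) (hq2 : IsPMF q2) (hq3 : IsPMF q3) :
    cmiInfo (pushf (blockPMF p1 p2 q1 q2 q3)
        (fun ω => (a2 • ω.1.2 + b2 • ω.2.1.2 + ω.2.2.2.1, ω.1.1, ω.2.1.2)))
      + cmiInfo (pushf (blockPMF p1 p2 q1 q2 q3)
        (fun ω => (a1 • ω.1.2 + b1 • ω.2.1.2 + ω.2.2.1, ω.2.1.1, ω.1.2)))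
      - miInfo (pushf (blockPMF p1 p2 q1 q2 q3)
        (fun ω => ((ω.1.1, ω.2.1.1),
          a3 • ω.1.2 + b3 • ω.2.1.2 +
            ((b3 * b1⁻¹) • ω.2.2.1 + (a3 * a2⁻¹) • ω.2.2.2.1 + ω.2.2.2.2))))
      ≤ Real.log (Fintype.card V)
        + Hent (pushf (blockPMF p1 p2 q1 q2 q3)
            (fun ω => (b3 * b1⁻¹) • ω.2.2.1 + (a3 * a2⁻¹) • ω.2.2.2.1 + ω.2.2.2.2))
        - Hent (pushf (blockPMF p1 p2 q1 q2 q3) (fun ω => ω.2.2.1))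
        - Hent (pushf (blockPMF p1 p2 q1 q2 q3) (fun ω => ω.2.2.2.1)) := by
  classical
  set P := blockPMF p1 p2 q1 q2 q3 with hPdef
  -- coefficient facts
  have hd : a3 * a2⁻¹ * a2 = a3 := by field_simp
  have hcb : b3 * b1⁻¹ * b1 = b3 := by field_simp
  have hd0 : a3 * a2⁻¹ ≠ 0 := mul_ne_zero ha3 (inv_ne_zero ha2)
  -- pmf facts
  have hPP : IsPMF P := by
    rw [hPdef, show blockPMF p1 p2 q1 q2 q3
      = (fun ω : (S1 × V) × (S2 × V) × V × V × V =>
          p1 ω.1 * (p2 ω.2.1 * (q1 ω.2.2.1 * (q2 ω.2.2.2.1 * q3 ω.2.2.2.2)))) from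
      funext fun ω => by simp only [blockPMF]; ring]
    exact ML.isPMF_mul hp1 (ML.isPMF_mul hp2 (ML.isPMF_mul hq1 (ML.isPMF_mul hq2 hq3)))
  have hPA1 : IsPMF (fun x : (S1 × V) × V => p1 x.1 * q2 x.2) := ML.isPMF_mul hp1 hq2
  have hPB1 : IsPMF (fun y : (S2 × V) × V × V => p2 y.1 * (q1 y.2.1 * q3 y.2.2)) :=
    ML.isPMF_mul hp2 (ML.isPMF_mul hq1 hq3)
  have hPB2 : IsPMF (fun y : (S2 × V) × V × V × V =>
      p2 y.1 * (q1 y.2.1 * (q2 y.2.2.1 * q3 y.2.2.2))) :=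
    ML.isPMF_mul hp2 (ML.isPMF_mul hq1 (ML.isPMF_mul hq2 hq3))
  have hPB4 : IsPMF (fun y : (S1 × V) × V × V × V =>
      p1 y.1 * (q1 y.2.1 * (q2 y.2.2.1 * q3 y.2.2.2))) :=
    ML.isPMF_mul hp1 (ML.isPMF_mul hq1 (ML.isPMF_mul hq2 hq3))
  have hPA5 : IsPMF (fun x : (S2 × V) × V => p2 x.1 * q1 x.2) := ML.isPMF_mul hp2 hq1
  have hPB5 : IsPMF (fun y : (S1 × V) × V × V => p1 y.1 * (q2 y.2.1 * q3 y.2.2)) :=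
    ML.isPMF_mul hp1 (ML.isPMF_mul hq2 hq3)
  -- factorizations
  have hfact1 : ∀ ω, P ω = (fun x : (S1 × V) × V => p1 x.1 * q2 x.2) (eq1 S1 S2 V ω).1
      * (fun y : (S2 × V) × V × V => p2 y.1 * (q1 y.2.1 * q3 y.2.2)) (eq1 S1 S2 V ω).2 := by
    intro ω
    rw [hPdef]
    simp only [blockPMF, eq1, Equiv.coe_fn_mk]
    ring
  have hfact2 : ∀ ω, P ω = p1 ((Equiv.refl ((S1 × V) × (S2 × V) × V × V × V)) ω).1
      * (fun y : (S2 × V) × V × V × V => p2 y.1 * (q1 y.2.1 * (q2 y.2.2.1 * q3 y.2.2.2)))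
        ((Equiv.refl ((S1 × V) × (S2 × V) × V × V × V)) ω).2 := by
    intro ω
    rw [hPdef]
    simp only [blockPMF, Equiv.refl_apply]
    ring
  have hfact4 : ∀ ω, P ω = p2 (eq4 S1 S2 V ω).1
      * (fun y : (S1 × V) × V × V × V => p1 y.1 * (q1 y.2.1 * (q2 y.2.2.1 * q3 y.2.2.2)))
        (eq4 S1 S2 V ω).2 := by
    intro ω
    rw [hPdef]
    simp only [blockPMF, eq4, Equiv.coe_fn_mk]
    ring
  have hfact5 : ∀ ω, P ω = (fun x : (S2 × V) × V => p2 x.1 * q1 x.2) (eq5 S1 S2 V ω).1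
      * (fun y : (S1 × V) × V × V => p1 y.1 * (q2 y.2.1 * q3 y.2.2)) (eq5 S1 S2 V ω).2 := by
    intro ω
    rw [hPdef]
    simp only [blockPMF, eq5, Equiv.coe_fn_mk]
    ring
  -- unfold the mutual informations
  have A1 : cmiInfo (pushf P (fun ω => (a2 • ω.1.2 + b2 • ω.2.1.2 + ω.2.2.2.1, ω.1.1, ω.2.1.2)))
      = Hent (pushf P (fun ω => (a2 • ω.1.2 + b2 • ω.2.1.2 + ω.2.2.2.1, ω.2.1.2))) + Hent (pushf P (fun ω => (ω.1.1, ω.2.1.2))) - Hent (pushf P (fun ω => ω.2.1.2)) - Hent (pushf P (fun ω => (a2 • ω.1.2 + b2 • ω.2.1.2 + ω.2.2.2.1, ω.1.1, ω.2.1.2))) :=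
    ML.cmi_eq P (fun ω => a2 • ω.1.2 + b2 • ω.2.1.2 + ω.2.2.2.1) (fun ω => ω.1.1) (fun ω => ω.2.1.2)
  have A2 : cmiInfo (pushf P (fun ω => (a1 • ω.1.2 + b1 • ω.2.1.2 + ω.2.2.1, ω.2.1.1, ω.1.2)))
      = Hent (pushf P (fun ω => (a1 • ω.1.2 + b1 • ω.2.1.2 + ω.2.2.1, ω.1.2))) + Hent (pushf P (fun ω => (ω.2.1.1, ω.1.2))) - Hent (pushf P (fun ω => ω.1.2)) - Hent (pushf P (fun ω => (a1 • ω.1.2 + b1 • ω.2.1.2 + ω.2.2.1, ω.2.1.1, ω.1.2))) :=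
    ML.cmi_eq P (fun ω => a1 • ω.1.2 + b1 • ω.2.1.2 + ω.2.2.1) (fun ω => ω.2.1.1) (fun ω => ω.1.2)
  have A3 : miInfo (pushf P (fun ω => ((ω.1.1, ω.2.1.1), a3 • ω.1.2 + b3 • ω.2.1.2 + ((b3 * b1⁻¹) • ω.2.2.1 + (a3 * a2⁻¹) • ω.2.2.2.1 + ω.2.2.2.2))))
      = Hent (pushf P (fun ω => (ω.1.1, ω.2.1.1))) + Hent (pushf P (fun ω => a3 • ω.1.2 + b3 • ω.2.1.2 + ((b3 * b1⁻¹) • ω.2.2.1 + (a3 * a2⁻¹) • ω.2.2.2.1 + ω.2.2.2.2))) - Hent (pushf P (fun ω => ((ω.1.1, ω.2.1.1), a3 • ω.1.2 + b3 • ω.2.1.2 + ((b3 * b1⁻¹) • ω.2.2.1 + (a3 * a2⁻¹) • ω.2.2.2.1 + ω.2.2.2.2)))) :=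
    ML.mi_eq P (fun ω => (ω.1.1, ω.2.1.1)) (fun ω => a3 • ω.1.2 + b3 • ω.2.1.2 + ((b3 * b1⁻¹) • ω.2.2.1 + (a3 * a2⁻¹) • ω.2.2.2.1 + ω.2.2.2.2))
  -- cmi1 reduction
  have B1 : Hent (pushf P (fun ω => (a2 • ω.1.2 + b2 • ω.2.1.2 + ω.2.2.2.1, ω.2.1.2))) = Hent (pushf P (fun ω => (a2 • ω.1.2 + ω.2.2.2.1, ω.2.1.2))) :=
    ML.Hinj' (fun p : V × V => (p.1 + b2 • p.2, p.2)) (ML.injAddLeft _)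
      (fun ω => by dsimp only; rw [Prod.mk.injEq]; exact ⟨by abel, rfl⟩)
  have B2 : Hent (pushf P (fun ω => (a2 • ω.1.2 + ω.2.2.2.1, ω.2.1.2))) = Hent (pushf P (fun ω => a2 • ω.1.2 + ω.2.2.2.1)) + Hent (pushf P (fun ω => ω.2.1.2)) :=
    ML.prodEnt hPA1 hPB1 (eq1 S1 S2 V) hfact1 (fun x => a2 • x.1.2 + x.2) (fun y => y.1.2)
  have B3 : Hent (pushf P (fun ω => (ω.1.1, ω.2.1.2))) = Hent (pushf P (fun ω => ω.1.1)) + Hent (pushf P (fun ω => ω.2.1.2)) :=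
    ML.prodEnt hPA1 hPB1 (eq1 S1 S2 V) hfact1 (fun x => x.1.1) (fun y => y.1.2)
  have B4 : Hent (pushf P (fun ω => (a2 • ω.1.2 + b2 • ω.2.1.2 + ω.2.2.2.1, ω.1.1, ω.2.1.2))) = Hent (pushf P (fun ω => (a2 • ω.1.2 + ω.2.2.2.1, ω.1.1, ω.2.1.2))) :=
    ML.Hinj' (fun p : V × S1 × V => (p.1 + b2 • p.2.2, p.2))
      (ML.injAddLeft (fun c : S1 × V => b2 • c.2))
      (fun ω => by dsimp only; rw [Prod.mk.injEq]; exact ⟨by abel, rfl⟩)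
  have B5a : Hent (pushf P (fun ω => (a2 • ω.1.2 + ω.2.2.2.1, ω.1.1, ω.2.1.2))) = Hent (pushf P (fun ω => ((a2 • ω.1.2 + ω.2.2.2.1, ω.1.1), ω.2.1.2))) :=
    ML.Hinj' (fun p : (V × S1) × V => (p.1.1, p.1.2, p.2))
      (ML.injOfLeftInv (fun q : V × S1 × V => ((q.1, q.2.1), q.2.2)) (fun _ => rfl))
      (fun ω => rfl)
  have B5b : Hent (pushf P (fun ω => ((a2 • ω.1.2 + ω.2.2.2.1, ω.1.1), ω.2.1.2))) = Hent (pushf P (fun ω => (a2 • ω.1.2 + ω.2.2.2.1, ω.1.1))) + Hent (pushf P (fun ω => ω.2.1.2)) :=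
    ML.prodEnt hPA1 hPB1 (eq1 S1 S2 V) hfact1
      (fun x => (a2 • x.1.2 + x.2, x.1.1)) (fun y => y.1.2)
  -- cmi2 reduction
  have C1 : Hent (pushf P (fun ω => (a1 • ω.1.2 + b1 • ω.2.1.2 + ω.2.2.1, ω.1.2))) = Hent (pushf P (fun ω => (b1 • ω.2.1.2 + ω.2.2.1, ω.1.2))) :=
    ML.Hinj' (fun p : V × V => (p.1 + a1 • p.2, p.2)) (ML.injAddLeft _)
      (fun ω => by dsimp only; rw [Prod.mk.injEq]; exact ⟨by abel, rfl⟩)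
  have C2a : Hent (pushf P (fun ω => (b1 • ω.2.1.2 + ω.2.2.1, ω.1.2))) = Hent (pushf P (fun ω => (ω.1.2, b1 • ω.2.1.2 + ω.2.2.1))) :=
    ML.Hinj' (Prod.swap : V × V → V × V) Prod.swap_injective (fun ω => rfl)
  have C2b : Hent (pushf P (fun ω => (ω.1.2, b1 • ω.2.1.2 + ω.2.2.1))) = Hent (pushf P (fun ω => ω.1.2)) + Hent (pushf P (fun ω => b1 • ω.2.1.2 + ω.2.2.1)) :=
    ML.prodEnt hp1 hPB2 (Equiv.refl _) hfact2 (fun x => x.2) (fun y => b1 • y.1.2 + y.2.1)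
  have C3a : Hent (pushf P (fun ω => (ω.2.1.1, ω.1.2))) = Hent (pushf P (fun ω => (ω.1.2, ω.2.1.1))) :=
    ML.Hinj' (Prod.swap : V × S2 → S2 × V) Prod.swap_injective (fun ω => rfl)
  have C3b : Hent (pushf P (fun ω => (ω.1.2, ω.2.1.1))) = Hent (pushf P (fun ω => ω.1.2)) + Hent (pushf P (fun ω => ω.2.1.1)) :=
    ML.prodEnt hp1 hPB2 (Equiv.refl _) hfact2 (fun x => x.2) (fun y => y.1.1)
  have C4 : Hent (pushf P (fun ω => (a1 • ω.1.2 + b1 • ω.2.1.2 + ω.2.2.1, ω.2.1.1, ω.1.2))) = Hent (pushf P (fun ω => (b1 • ω.2.1.2 + ω.2.2.1, ω.2.1.1, ω.1.2))) :=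
    ML.Hinj' (fun p : V × S2 × V => (p.1 + a1 • p.2.2, p.2))
      (ML.injAddLeft (fun c : S2 × V => a1 • c.2))
      (fun ω => by dsimp only; rw [Prod.mk.injEq]; exact ⟨by abel, rfl⟩)
  have C5a : Hent (pushf P (fun ω => (b1 • ω.2.1.2 + ω.2.2.1, ω.2.1.1, ω.1.2))) = Hent (pushf P (fun ω => (ω.1.2, (b1 • ω.2.1.2 + ω.2.2.1, ω.2.1.1)))) :=
    ML.Hinj' (fun p : V × V × S2 => (p.2.1, p.2.2, p.1))
      (ML.injOfLeftInv (fun q : V × S2 × V => (q.2.2, q.1, q.2.1)) (fun _ => rfl))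
      (fun ω => rfl)
  have C5b : Hent (pushf P (fun ω => (ω.1.2, (b1 • ω.2.1.2 + ω.2.2.1, ω.2.1.1)))) = Hent (pushf P (fun ω => ω.1.2)) + Hent (pushf P (fun ω => (b1 • ω.2.1.2 + ω.2.2.1, ω.2.1.1))) :=
    ML.prodEnt hp1 hPB2 (Equiv.refl _) hfact2 (fun x => x.2)
      (fun y => (b1 • y.1.2 + y.2.1, y.1.1))
  -- mi reduction
  have D1 : Hent (pushf P (fun ω => (ω.1.1, ω.2.1.1))) = Hent (pushf P (fun ω => ω.1.1)) + Hent (pushf P (fun ω => ω.2.1.1)) :=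
    ML.prodEnt hp1 hPB2 (Equiv.refl _) hfact2 (fun x => x.1) (fun y => y.1.1)
  have D2 : Hent (pushf P (fun ω => ((ω.1.1, ω.2.1.1), a3 • ω.1.2 + b3 • ω.2.1.2 + ((b3 * b1⁻¹) • ω.2.2.1 + (a3 * a2⁻¹) • ω.2.2.2.1 + ω.2.2.2.2)))) = Hent (pushf P (fun ω => (a3 • ω.1.2 + b3 • ω.2.1.2 + ((b3 * b1⁻¹) • ω.2.2.1 + (a3 * a2⁻¹) • ω.2.2.2.1 + ω.2.2.2.2), ω.1.1, ω.2.1.1))) :=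
    ML.Hinj' (fun p : V × S1 × S2 => ((p.2.1, p.2.2), p.1))
      (ML.injOfLeftInv (fun q : (S1 × S2) × V => (q.2, q.1.1, q.1.2)) (fun _ => rfl))
      (fun ω => rfl)
  -- core submodularity 1
  have E0 : Hent (pushf P (fun ω => (ω.1.2, a2 • ω.1.2 + ω.2.2.2.1, (a3 • ω.1.2 + b3 • ω.2.1.2 + ((b3 * b1⁻¹) • ω.2.2.1 + (a3 * a2⁻¹) • ω.2.2.2.1 + ω.2.2.2.2), ω.1.1, ω.2.1.1)))) + Hent (pushf P (fun ω => (a3 • ω.1.2 + b3 • ω.2.1.2 + ((b3 * b1⁻¹) • ω.2.2.1 + (a3 * a2⁻¹) • ω.2.2.2.1 + ω.2.2.2.2), ω.1.1, ω.2.1.1)))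
      ≤ Hent (pushf P (fun ω => (ω.1.2, (a3 • ω.1.2 + b3 • ω.2.1.2 + ((b3 * b1⁻¹) • ω.2.2.1 + (a3 * a2⁻¹) • ω.2.2.2.1 + ω.2.2.2.2), ω.1.1, ω.2.1.1)))) + Hent (pushf P (fun ω => (a2 • ω.1.2 + ω.2.2.2.1, (a3 • ω.1.2 + b3 • ω.2.1.2 + ((b3 * b1⁻¹) • ω.2.2.1 + (a3 * a2⁻¹) • ω.2.2.2.1 + ω.2.2.2.2), ω.1.1, ω.2.1.1)))) :=
    ML.submod' hPP (fun ω => ω.1.2) (fun ω => a2 • ω.1.2 + ω.2.2.2.1) (fun ω => (a3 • ω.1.2 + b3 • ω.2.1.2 + ((b3 * b1⁻¹) • ω.2.2.1 + (a3 * a2⁻¹) • ω.2.2.2.1 + ω.2.2.2.2), ω.1.1, ω.2.1.1))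
  have E1 : Hent (pushf P (fun ω => (ω.1.2, (a3 • ω.1.2 + b3 • ω.2.1.2 + ((b3 * b1⁻¹) • ω.2.2.1 + (a3 * a2⁻¹) • ω.2.2.2.1 + ω.2.2.2.2), ω.1.1, ω.2.1.1)))) = Hent (pushf P (fun ω => (ω.1.2, (b3 • ω.2.1.2 + ((b3 * b1⁻¹) • ω.2.2.1 + (a3 * a2⁻¹) • ω.2.2.2.1 + ω.2.2.2.2), ω.1.1, ω.2.1.1)))) :=
    ML.Hinj' (fun p : V × V × S1 × S2 => (p.1, a3 • p.1 + p.2.1, p.2.2))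
      (ML.injAddMid (fun b : V => a3 • b))
      (fun ω => by dsimp only; rw [Prod.mk.injEq, Prod.mk.injEq]
                   exact ⟨rfl, by abel, rfl⟩)
  have E2 : Hent (pushf P (fun ω => (ω.1.2, (b3 • ω.2.1.2 + ((b3 * b1⁻¹) • ω.2.2.1 + (a3 * a2⁻¹) • ω.2.2.2.1 + ω.2.2.2.2), ω.1.1, ω.2.1.1)))) = Hent (pushf P (fun ω => ((ω.1.2, ω.1.1), (b3 • ω.2.1.2 + ((b3 * b1⁻¹) • ω.2.2.1 + (a3 * a2⁻¹) • ω.2.2.2.1 + ω.2.2.2.2), ω.2.1.1)))) :=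
    ML.Hinj' (fun p : (V × S1) × V × S2 => (p.1.1, p.2.1, p.1.2, p.2.2))
      (ML.injOfLeftInv (fun q : V × V × S1 × S2 => ((q.1, q.2.2.1), q.2.1, q.2.2.2))
        (fun _ => rfl))
      (fun ω => rfl)
  have E3 : Hent (pushf P (fun ω => ((ω.1.2, ω.1.1), (b3 • ω.2.1.2 + ((b3 * b1⁻¹) • ω.2.2.1 + (a3 * a2⁻¹) • ω.2.2.2.1 + ω.2.2.2.2), ω.2.1.1)))) = Hent (pushf P (fun ω => (ω.1.2, ω.1.1))) + Hent (pushf P (fun ω => (b3 • ω.2.1.2 + ((b3 * b1⁻¹) • ω.2.2.1 + (a3 * a2⁻¹) • ω.2.2.2.1 + ω.2.2.2.2), ω.2.1.1))) :=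
    ML.prodEnt hp1 hPB2 (Equiv.refl _) hfact2 (fun x => (x.2, x.1))
      (fun y => (b3 • y.1.2 + ((b3 * b1⁻¹) • y.2.1 + (a3 * a2⁻¹) • y.2.2.1 + y.2.2.2), y.1.1))
  have E4 : Hent (pushf P (fun ω => (a2 • ω.1.2 + ω.2.2.2.1, (a3 • ω.1.2 + b3 • ω.2.1.2 + ((b3 * b1⁻¹) • ω.2.2.1 + (a3 * a2⁻¹) • ω.2.2.2.1 + ω.2.2.2.2), ω.1.1, ω.2.1.1)))) = Hent (pushf P (fun ω => (a2 • ω.1.2 + ω.2.2.2.1, ((b3 * b1⁻¹) • (b1 • ω.2.1.2 + ω.2.2.1) + ω.2.2.2.2, ω.1.1, ω.2.1.1)))) :=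
    ML.Hinj' (fun p : V × V × S1 × S2 => (p.1, (a3 * a2⁻¹) • p.1 + p.2.1, p.2.2))
      (ML.injAddMid (fun b : V => (a3 * a2⁻¹) • b))
      (fun ω => by dsimp only; rw [Prod.mk.injEq, Prod.mk.injEq]
                   refine ⟨rfl, ?_, rfl⟩
                   simp only [smul_add, smul_smul, hd, hcb]
                   abel)
  have E5 : Hent (pushf P (fun ω => (a2 • ω.1.2 + ω.2.2.2.1, ((b3 * b1⁻¹) • (b1 • ω.2.1.2 + ω.2.2.1) + ω.2.2.2.2, ω.1.1, ω.2.1.1)))) = Hent (pushf P (fun ω => ((a2 • ω.1.2 + ω.2.2.2.1, ω.1.1), ((b3 * b1⁻¹) • (b1 • ω.2.1.2 + ω.2.2.1) + ω.2.2.2.2, ω.2.1.1)))) :=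
    ML.Hinj' (fun p : (V × S1) × V × S2 => (p.1.1, p.2.1, p.1.2, p.2.2))
      (ML.injOfLeftInv (fun q : V × V × S1 × S2 => ((q.1, q.2.2.1), q.2.1, q.2.2.2))
        (fun _ => rfl))
      (fun ω => rfl)
  have E6 : Hent (pushf P (fun ω => ((a2 • ω.1.2 + ω.2.2.2.1, ω.1.1), ((b3 * b1⁻¹) • (b1 • ω.2.1.2 + ω.2.2.1) + ω.2.2.2.2, ω.2.1.1)))) = Hent (pushf P (fun ω => (a2 • ω.1.2 + ω.2.2.2.1, ω.1.1))) + Hent (pushf P (fun ω => ((b3 * b1⁻¹) • (b1 • ω.2.1.2 + ω.2.2.1) + ω.2.2.2.2, ω.2.1.1))) :=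
    ML.prodEnt hPA1 hPB1 (eq1 S1 S2 V) hfact1 (fun x => (a2 • x.1.2 + x.2, x.1.1))
      (fun y => ((b3 * b1⁻¹) • (b1 • y.1.2 + y.2.1) + y.2.2, y.1.1))
  have E7 : Hent (pushf P (fun ω => (ω.1.2, a2 • ω.1.2 + ω.2.2.2.1, (a3 • ω.1.2 + b3 • ω.2.1.2 + ((b3 * b1⁻¹) • ω.2.2.1 + (a3 * a2⁻¹) • ω.2.2.2.1 + ω.2.2.2.2), ω.1.1, ω.2.1.1)))) = Hent (pushf P (fun ω => (ω.1.2, a2 • ω.1.2 + ω.2.2.2.1, ((b3 * b1⁻¹) • (b1 • ω.2.1.2 + ω.2.2.1) + ω.2.2.2.2, ω.1.1, ω.2.1.1)))) :=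
    ML.Hinj' (Prod.map (id : V → V)
        (fun q : V × V × S1 × S2 => (q.1, (a3 * a2⁻¹) • q.1 + q.2.1, q.2.2)))
      (Function.injective_id.prodMap (ML.injAddMid (fun b : V => (a3 * a2⁻¹) • b)))
      (fun ω => by
        dsimp only [Prod.map]
        rw [Prod.mk.injEq, Prod.mk.injEq, Prod.mk.injEq]
        refine ⟨rfl, rfl, ?_, rfl⟩
        simp only [smul_add, smul_smul, hd, hcb]
        abel)
  have E8 : Hent (pushf P (fun ω => (ω.1.2, a2 • ω.1.2 + ω.2.2.2.1, ((b3 * b1⁻¹) • (b1 • ω.2.1.2 + ω.2.2.1) + ω.2.2.2.2, ω.1.1, ω.2.1.1)))) = Hent (pushf P (fun ω => ((ω.1.2, a2 • ω.1.2 + ω.2.2.2.1, ω.1.1), ((b3 * b1⁻¹) • (b1 • ω.2.1.2 + ω.2.2.1) + ω.2.2.2.2, ω.2.1.1)))) :=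
    ML.Hinj' (fun p : (V × V × S1) × V × S2 => (p.1.1, p.1.2.1, p.2.1, p.1.2.2, p.2.2))
      (ML.injOfLeftInv
        (fun q : V × V × V × S1 × S2 => ((q.1, q.2.1, q.2.2.2.1), q.2.2.1, q.2.2.2.2))
        (fun _ => rfl))
      (fun ω => rfl)
  have E9 : Hent (pushf P (fun ω => ((ω.1.2, a2 • ω.1.2 + ω.2.2.2.1, ω.1.1), ((b3 * b1⁻¹) • (b1 • ω.2.1.2 + ω.2.2.1) + ω.2.2.2.2, ω.2.1.1)))) = Hent (pushf P (fun ω => (ω.1.2, a2 • ω.1.2 + ω.2.2.2.1, ω.1.1))) + Hent (pushf P (fun ω => ((b3 * b1⁻¹) • (b1 • ω.2.1.2 + ω.2.2.1) + ω.2.2.2.2, ω.2.1.1))) :=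
    ML.prodEnt hPA1 hPB1 (eq1 S1 S2 V) hfact1
      (fun x => (x.1.2, a2 • x.1.2 + x.2, x.1.1))
      (fun y => ((b3 * b1⁻¹) • (b1 • y.1.2 + y.2.1) + y.2.2, y.1.1))
  have E10a : Hent (pushf P (fun ω => (ω.1.2, a2 • ω.1.2 + ω.2.2.2.1, ω.1.1))) = Hent (pushf P (fun ω => (ω.1.2, ω.2.2.2.1, ω.1.1))) :=
    ML.Hinj' (fun p : V × V × S1 => (p.1, a2 • p.1 + p.2.1, p.2.2))
      (ML.injAddMid (fun b : V => a2 • b)) (fun ω => rfl)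
  have E10b : Hent (pushf P (fun ω => (ω.1.2, ω.2.2.2.1, ω.1.1))) = Hent (pushf P (fun ω => ((ω.1.2, ω.1.1), ω.2.2.2.1))) :=
    ML.Hinj' (fun p : (V × S1) × V => (p.1.1, p.2, p.1.2))
      (ML.injOfLeftInv (fun q : V × V × S1 => ((q.1, q.2.2), q.2.1)) (fun _ => rfl))
      (fun ω => rfl)
  have E10c : Hent (pushf P (fun ω => ((ω.1.2, ω.1.1), ω.2.2.2.1))) = Hent (pushf P (fun ω => (ω.1.2, ω.1.1))) + Hent (pushf P (fun ω => ω.2.2.2.1)) :=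
    ML.prodEnt hp1 hPB2 (Equiv.refl _) hfact2 (fun x => (x.2, x.1)) (fun y => y.2.2.1)
  -- core submodularity 2
  have F0 : Hent (pushf P (fun ω => (ω.2.1.2, b1 • ω.2.1.2 + ω.2.2.1, (b3 • ω.2.1.2 + ((b3 * b1⁻¹) • ω.2.2.1 + (a3 * a2⁻¹) • ω.2.2.2.1 + ω.2.2.2.2), ω.2.1.1)))) + Hent (pushf P (fun ω => (b3 • ω.2.1.2 + ((b3 * b1⁻¹) • ω.2.2.1 + (a3 * a2⁻¹) • ω.2.2.2.1 + ω.2.2.2.2), ω.2.1.1)))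
      ≤ Hent (pushf P (fun ω => (ω.2.1.2, (b3 • ω.2.1.2 + ((b3 * b1⁻¹) • ω.2.2.1 + (a3 * a2⁻¹) • ω.2.2.2.1 + ω.2.2.2.2), ω.2.1.1)))) + Hent (pushf P (fun ω => (b1 • ω.2.1.2 + ω.2.2.1, (b3 • ω.2.1.2 + ((b3 * b1⁻¹) • ω.2.2.1 + (a3 * a2⁻¹) • ω.2.2.2.1 + ω.2.2.2.2), ω.2.1.1)))) :=
    ML.submod' hPP (fun ω => ω.2.1.2) (fun ω => b1 • ω.2.1.2 + ω.2.2.1) (fun ω => (b3 • ω.2.1.2 + ((b3 * b1⁻¹) • ω.2.2.1 + (a3 * a2⁻¹) • ω.2.2.2.1 + ω.2.2.2.2), ω.2.1.1))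
  have F1 : Hent (pushf P (fun ω => (ω.2.1.2, (b3 • ω.2.1.2 + ((b3 * b1⁻¹) • ω.2.2.1 + (a3 * a2⁻¹) • ω.2.2.2.1 + ω.2.2.2.2), ω.2.1.1)))) = Hent (pushf P (fun ω => (ω.2.1.2, ((b3 * b1⁻¹) • ω.2.2.1 + (a3 * a2⁻¹) • ω.2.2.2.1 + ω.2.2.2.2, ω.2.1.1)))) :=
    ML.Hinj' (fun p : V × V × S2 => (p.1, b3 • p.1 + p.2.1, p.2.2))
      (ML.injAddMid (fun b : V => b3 • b)) (fun ω => rfl)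
  have F2a : Hent (pushf P (fun ω => (ω.2.1.2, ((b3 * b1⁻¹) • ω.2.2.1 + (a3 * a2⁻¹) • ω.2.2.2.1 + ω.2.2.2.2, ω.2.1.1)))) = Hent (pushf P (fun ω => ((ω.2.1.2, ω.2.1.1), (b3 * b1⁻¹) • ω.2.2.1 + (a3 * a2⁻¹) • ω.2.2.2.1 + ω.2.2.2.2))) :=
    ML.Hinj' (fun p : (V × S2) × V => (p.1.1, p.2, p.1.2))
      (ML.injOfLeftInv (fun q : V × V × S2 => ((q.1, q.2.2), q.2.1)) (fun _ => rfl))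
      (fun ω => rfl)
  have F2b : Hent (pushf P (fun ω => ((ω.2.1.2, ω.2.1.1), (b3 * b1⁻¹) • ω.2.2.1 + (a3 * a2⁻¹) • ω.2.2.2.1 + ω.2.2.2.2))) = Hent (pushf P (fun ω => (ω.2.1.2, ω.2.1.1))) + Hent (pushf P (fun ω => (b3 * b1⁻¹) • ω.2.2.1 + (a3 * a2⁻¹) • ω.2.2.2.1 + ω.2.2.2.2)) :=
    ML.prodEnt hp2 hPB4 (eq4 S1 S2 V) hfact4 (fun x => (x.2, x.1))
      (fun y => (b3 * b1⁻¹) • y.2.1 + (a3 * a2⁻¹) • y.2.2.1 + y.2.2.2)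
  have F3 : Hent (pushf P (fun ω => (b1 • ω.2.1.2 + ω.2.2.1, (b3 • ω.2.1.2 + ((b3 * b1⁻¹) • ω.2.2.1 + (a3 * a2⁻¹) • ω.2.2.2.1 + ω.2.2.2.2), ω.2.1.1)))) = Hent (pushf P (fun ω => (b1 • ω.2.1.2 + ω.2.2.1, ((a3 * a2⁻¹) • ω.2.2.2.1 + ω.2.2.2.2, ω.2.1.1)))) :=
    ML.Hinj' (fun p : V × V × S2 => (p.1, (b3 * b1⁻¹) • p.1 + p.2.1, p.2.2))
      (ML.injAddMid (fun b : V => (b3 * b1⁻¹) • b))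
      (fun ω => by dsimp only; rw [Prod.mk.injEq, Prod.mk.injEq]
                   refine ⟨rfl, ?_, rfl⟩
                   simp only [smul_add, smul_smul, hcb]
                   abel)
  have F4a : Hent (pushf P (fun ω => (b1 • ω.2.1.2 + ω.2.2.1, ((a3 * a2⁻¹) • ω.2.2.2.1 + ω.2.2.2.2, ω.2.1.1)))) = Hent (pushf P (fun ω => ((b1 • ω.2.1.2 + ω.2.2.1, ω.2.1.1), (a3 * a2⁻¹) • ω.2.2.2.1 + ω.2.2.2.2))) :=
    ML.Hinj' (fun p : (V × S2) × V => (p.1.1, p.2, p.1.2))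
      (ML.injOfLeftInv (fun q : V × V × S2 => ((q.1, q.2.2), q.2.1)) (fun _ => rfl))
      (fun ω => rfl)
  have F4b : Hent (pushf P (fun ω => ((b1 • ω.2.1.2 + ω.2.2.1, ω.2.1.1), (a3 * a2⁻¹) • ω.2.2.2.1 + ω.2.2.2.2))) = Hent (pushf P (fun ω => (b1 • ω.2.1.2 + ω.2.2.1, ω.2.1.1))) + Hent (pushf P (fun ω => (a3 * a2⁻¹) • ω.2.2.2.1 + ω.2.2.2.2)) :=
    ML.prodEnt hPA5 hPB5 (eq5 S1 S2 V) hfact5 (fun x => (b1 • x.1.2 + x.2, x.1.1))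
      (fun y => (a3 * a2⁻¹) • y.2.1 + y.2.2)
  have F5 : Hent (pushf P (fun ω => (ω.2.1.2, b1 • ω.2.1.2 + ω.2.2.1, (b3 • ω.2.1.2 + ((b3 * b1⁻¹) • ω.2.2.1 + (a3 * a2⁻¹) • ω.2.2.2.1 + ω.2.2.2.2), ω.2.1.1)))) = Hent (pushf P (fun ω => (ω.2.1.2, b1 • ω.2.1.2 + ω.2.2.1, ((a3 * a2⁻¹) • ω.2.2.2.1 + ω.2.2.2.2, ω.2.1.1)))) :=
    ML.Hinj' (Prod.map (id : V → V)
        (fun q : V × V × S2 => (q.1, (b3 * b1⁻¹) • q.1 + q.2.1, q.2.2)))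
      (Function.injective_id.prodMap (ML.injAddMid (fun b : V => (b3 * b1⁻¹) • b)))
      (fun ω => by
        dsimp only [Prod.map]
        rw [Prod.mk.injEq, Prod.mk.injEq, Prod.mk.injEq]
        refine ⟨rfl, rfl, ?_, rfl⟩
        simp only [smul_add, smul_smul, hcb]
        abel)
  have F6a : Hent (pushf P (fun ω => (ω.2.1.2, b1 • ω.2.1.2 + ω.2.2.1, ((a3 * a2⁻¹) • ω.2.2.2.1 + ω.2.2.2.2, ω.2.1.1)))) = Hent (pushf P (fun ω => ((ω.2.1.2, b1 • ω.2.1.2 + ω.2.2.1, ω.2.1.1), (a3 * a2⁻¹) • ω.2.2.2.1 + ω.2.2.2.2))) :=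
    ML.Hinj' (fun p : (V × V × S2) × V => (p.1.1, p.1.2.1, p.2, p.1.2.2))
      (ML.injOfLeftInv (fun q : V × V × V × S2 => ((q.1, q.2.1, q.2.2.2), q.2.2.1))
        (fun _ => rfl))
      (fun ω => rfl)
  have F6b : Hent (pushf P (fun ω => ((ω.2.1.2, b1 • ω.2.1.2 + ω.2.2.1, ω.2.1.1), (a3 * a2⁻¹) • ω.2.2.2.1 + ω.2.2.2.2))) = Hent (pushf P (fun ω => (ω.2.1.2, b1 • ω.2.1.2 + ω.2.2.1, ω.2.1.1))) + Hent (pushf P (fun ω => (a3 * a2⁻¹) • ω.2.2.2.1 + ω.2.2.2.2)) :=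
    ML.prodEnt hPA5 hPB5 (eq5 S1 S2 V) hfact5
      (fun x => (x.1.2, b1 • x.1.2 + x.2, x.1.1)) (fun y => (a3 * a2⁻¹) • y.2.1 + y.2.2)
  have F7 : Hent (pushf P (fun ω => (ω.2.1.2, b1 • ω.2.1.2 + ω.2.2.1, ω.2.1.1))) = Hent (pushf P (fun ω => (ω.2.1.2, ω.2.2.1, ω.2.1.1))) :=
    ML.Hinj' (fun p : V × V × S2 => (p.1, b1 • p.1 + p.2.1, p.2.2))
      (ML.injAddMid (fun b : V => b1 • b)) (fun ω => rfl)
  have F8a : Hent (pushf P (fun ω => (ω.2.1.2, ω.2.2.1, ω.2.1.1))) = Hent (pushf P (fun ω => ((ω.2.1.2, ω.2.1.1), ω.2.2.1))) :=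
    ML.Hinj' (fun p : (V × S2) × V => (p.1.1, p.2, p.1.2))
      (ML.injOfLeftInv (fun q : V × V × S2 => ((q.1, q.2.2), q.2.1)) (fun _ => rfl))
      (fun ω => rfl)
  have F8b : Hent (pushf P (fun ω => ((ω.2.1.2, ω.2.1.1), ω.2.2.1))) = Hent (pushf P (fun ω => (ω.2.1.2, ω.2.1.1))) + Hent (pushf P (fun ω => ω.2.2.1)) :=
    ML.prodEnt hp2 hPB4 (eq4 S1 S2 V) hfact4 (fun x => (x.2, x.1)) (fun y => y.2.1)
  -- H(U) ≤ H(Z)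
  have G1a : Hent (pushf P (fun ω => (a2 • ω.1.2 + ω.2.2.2.1, (b3 * b1⁻¹) • (b1 • ω.2.1.2 + ω.2.2.1) + ω.2.2.2.2))) = Hent (pushf P (fun ω => a2 • ω.1.2 + ω.2.2.2.1)) + Hent (pushf P (fun ω => (b3 * b1⁻¹) • (b1 • ω.2.1.2 + ω.2.2.1) + ω.2.2.2.2)) :=
    ML.prodEnt hPA1 hPB1 (eq1 S1 S2 V) hfact1 (fun x => a2 • x.1.2 + x.2)
      (fun y => (b3 * b1⁻¹) • (b1 • y.1.2 + y.2.1) + y.2.2)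
  have G1b : Hent (pushf P (fun ω => (a3 • ω.1.2 + b3 • ω.2.1.2 + ((b3 * b1⁻¹) • ω.2.2.1 + (a3 * a2⁻¹) • ω.2.2.2.1 + ω.2.2.2.2), (b3 * b1⁻¹) • (b1 • ω.2.1.2 + ω.2.2.1) + ω.2.2.2.2))) = Hent (pushf P (fun ω => (a2 • ω.1.2 + ω.2.2.2.1, (b3 * b1⁻¹) • (b1 • ω.2.1.2 + ω.2.2.1) + ω.2.2.2.2))) :=
    ML.Hinj' (fun p : V × V => ((a3 * a2⁻¹) • p.1 + p.2, p.2)) (ML.injSmulShift hd0)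
      (fun ω => by dsimp only; rw [Prod.mk.injEq]
                   refine ⟨?_, rfl⟩
                   simp only [smul_add, smul_smul, hd, hcb]
                   abel)
  have G1c : Hent (pushf P (fun ω => (a3 • ω.1.2 + b3 • ω.2.1.2 + ((b3 * b1⁻¹) • ω.2.2.1 + (a3 * a2⁻¹) • ω.2.2.2.1 + ω.2.2.2.2), (b3 * b1⁻¹) • (b1 • ω.2.1.2 + ω.2.2.1) + ω.2.2.2.2))) ≤ Hent (pushf P (fun ω => a3 • ω.1.2 + b3 • ω.2.1.2 + ((b3 * b1⁻¹) • ω.2.2.1 + (a3 * a2⁻¹) • ω.2.2.2.1 + ω.2.2.2.2))) + Hent (pushf P (fun ω => (b3 * b1⁻¹) • (b1 • ω.2.1.2 + ω.2.2.1) + ω.2.2.2.2)) :=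
    ML.subadd' hPP (fun ω => a3 • ω.1.2 + b3 • ω.2.1.2 + ((b3 * b1⁻¹) • ω.2.2.1 + (a3 * a2⁻¹) • ω.2.2.2.1 + ω.2.2.2.2)) (fun ω => (b3 * b1⁻¹) • (b1 • ω.2.1.2 + ω.2.2.1) + ω.2.2.2.2)
  -- H(W) ≤ log |V|
  have G2 : Hent (pushf P (fun ω => b1 • ω.2.1.2 + ω.2.2.1)) ≤ Real.log (Fintype.card V) :=
    ML.Hent_le_log_card (ML.isPMF_pushf hPP (fun ω => b1 • ω.2.1.2 + ω.2.2.1))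
  linarith
end
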